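/- arXiv:1009.0144 — 5 statements merged into one kernel-verified Lean document; each statement's English description precedes it below -/
import Mathlib

section
/- The elementary symmetric polynomial e_k evaluated at the Jucys-Murphy elements J_1,...,J_n equals the sum of all permutations in S_n having exactly n-k cycles: e_k(J_1,...,J_n) = Σ_{σ ∈ S_n, κ(σ)=n-k} σ, where κ(σ) is the number of cycles of σ (fixed points included). -/
/-!
Induction on `n`. Splitting the increasing sequences according to whether they end at `n + 1`
gives `e_{k+1}(J_1,…,J_{n+1}) = e_{k+1}(J_1,…,J_n) + e_k(J_1,…,J_n) J_{n+1}`.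
On the other side, a permutation of `S_{n+1}` either fixes `n + 1`, and is then a permutation of
`S_n` with one cycle fewer, or is uniquely `σ (j n+1)` with `σ ∈ S_n` and `j ≤ n`. Multiplying
`σ` on the right by `(j n+1)` inserts the fixed point `n + 1` into the cycle of `j`, so `σ (j n+1)`
has as many cycles as `σ` has in `S_n`.
-/

open Finset
open scoped Classical

/-- The Jucys-Murphy element `J_i = Σ_{j<i} (j i)` in the group algebra `ℤ[S_n]`. -/
noncomputable def JM (n : ℕ) (i : Fin n) : MonoidAlgebra ℤ (Equiv.Perm (Fin n)) :=
  ∑ j ∈ Finset.univ.filter (fun j : Fin n => j < i),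
    MonoidAlgebra.of ℤ (Equiv.Perm (Fin n)) (Equiv.swap j i)

/-- Evaluation of the elementary symmetric polynomial `e_k` at a family of
(pairwise commuting) elements: sum over strictly increasing sequences. -/
noncomputable def eEval {n : ℕ} {A : Type*} [Ring A] (k : ℕ) (g : Fin n → A) : A :=
  ∑ f ∈ Finset.univ.filter (fun f : Fin k → Fin n => StrictMono f),
    (List.ofFn (fun t => g (f t))).prod

/-- The number of cycles of a permutation, fixed points included. -/
def kappa {n : ℕ} (σ : Equiv.Perm (Fin n)) : ℕ :=
  σ.cycleType.card + (n - σ.cycleType.sum)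

lemma Fin.strictMono_snoc_iff {α : Type*} [Preorder α] {k : ℕ} {f : Fin k → α} {x : α} :
    StrictMono (Fin.snoc f x : Fin (k + 1) → α) ↔ StrictMono f ∧ ∀ i, f i < x := by
  rw [← Fin.insertNth_last', Fin.strictMono_insertNth_iff]
  simp [Fin.castSucc_lt_last]

section ElementarySymmetric
variable {A : Type*} [Ring A]

lemma eEval_zero {n : ℕ} (g : Fin n → A) : eEval 0 g = 1 := by
  have : ∀ f : Fin 0 → Fin n, StrictMono f := fun _ a => a.elim0
  simp [eEval, this]

lemma eEval_of_lt {n k : ℕ} (g : Fin n → A) (h : n < k) : eEval k g = 0 := by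
  refine sum_eq_zero fun f hf => absurd h (not_lt.2 ?_)
  simpa using Fintype.card_le_of_injective f (mem_filter.1 hf).2.injective

lemma eEval_succ {n k : ℕ} (g : Fin (n + 1) → A) :
    eEval (k + 1) g = eEval (k + 1) (fun i : Fin n => g i.castSucc)
        + eEval k (fun i : Fin n => g i.castSucc) * g (Fin.last n) := by
  rw [eEval, ← sum_filter_not_add_sum_filter _ (fun f => f (Fin.last k) = Fin.last n),
    eEval, eEval, sum_mul]
  simp only [filter_filter]
  congr 1
  · symm
    refine sum_bij (fun f _ => Fin.castSucc ∘ f) (fun f hf => ?_)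
      (fun f _ f' _ h => funext fun t => Fin.castSucc_injective n (congrFun h t))
      (fun f hf => ?_) (fun f _ => rfl)
    · simp only [mem_filter, mem_univ, true_and] at hf ⊢
      exact ⟨Fin.strictMono_castSucc.comp hf, (Fin.castSucc_lt_last _).ne⟩
    · simp only [mem_filter, mem_univ, true_and] at hf
      have hne (t) : f t ≠ Fin.last n :=
        ((hf.1.monotone (Fin.le_last t)).trans_lt (Fin.lt_last_iff_ne_last.2 hf.2)).ne
      exact ⟨fun t => (f t).castPred (hne t), by simpa using Fin.strictMono_castPred_comp hne hf.1,
        funext fun t => Fin.castSucc_castPred _ _⟩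
  · symm
    refine sum_bij (fun f _ => Fin.snoc (Fin.castSucc ∘ f) (Fin.last n)) (fun f hf => ?_)
      (fun f _ f' _ h => funext fun t => ?_) (fun f hf => ?_) (fun f _ => ?_)
    · simp only [mem_filter, mem_univ, true_and, Fin.strictMono_snoc_iff, Fin.snoc_last] at hf ⊢
      exact ⟨⟨Fin.strictMono_castSucc.comp hf, fun t => Fin.castSucc_lt_last _⟩, trivial⟩
    · simpa using congrFun h t.castSucc
    · simp only [mem_filter, mem_univ, true_and] at hf
      have hne (t : Fin k) : f t.castSucc ≠ Fin.last n :=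
        (hf.2 ▸ hf.1 (Fin.castSucc_lt_last t)).ne
      refine ⟨fun t => (f t.castSucc).castPred (hne t), ?_, funext fun t => ?_⟩
      · simpa using Fin.strictMono_castPred_comp hne (hf.1.comp Fin.strictMono_castSucc)
      · induction t using Fin.lastCases <;> simp [hf.2]
    · rw [List.ofFn_succ', List.prod_concat]
      simp

lemma map_eEval {B : Type*} [Ring B] (φ : A →+* B) {n : ℕ} (k : ℕ) (g : Fin n → A) :
    φ (eEval k g) = eEval k (fun i => φ (g i)) := by
  simp only [eEval, map_sum, map_list_prod, List.map_ofFn, Function.comp_def]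

end ElementarySymmetric

namespace Equiv.Perm
variable {α : Type*} [DecidableEq α] [Fintype α]

lemma card_parts_partition_add_sum_cycleType (σ : Perm α) :
    σ.partition.parts.card + σ.cycleType.sum = σ.cycleType.card + Fintype.card α := by
  have := σ.support.card_le_univ
  rw [parts_partition, Multiset.card_add, Multiset.card_replicate, sum_cycleType]
  omega

lemma Disjoint.card_parts_partition_mul {g r : Perm α} (h : Disjoint g r) :
    (g * r).partition.parts.card + g.cycleType.sum = g.cycleType.card + r.partition.parts.card := by
  have hgr := card_parts_partition_add_sum_cycleType (g * r)
  have hr := card_parts_partition_add_sum_cycleType r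
  rw [h.cycleType_mul, Multiset.sum_add, Multiset.card_add] at hgr
  omega

lemma IsCycle.card_parts_partition_mul {c r : Perm α} (hc : c.IsCycle) (h : Disjoint c r) :
    (c * r).partition.parts.card + #c.support = r.partition.parts.card + 1 := by
  simpa [hc.cycleType, add_comm 1] using h.card_parts_partition_mul

theorem card_parts_partition_swap_mul {f : Perm α} {x : α} (hx : f x ≠ x) :
    (swap x (f x) * f).partition.parts.card = f.partition.parts.card + 1 := by
  set c := f.cycleOf x
  set r := f * c⁻¹
  have hc : c.IsCycle := isCycle_cycleOf f hx
  have hcx : c x = f x := cycleOf_apply_self f x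
  have hd : Disjoint c r := (disjoint_mul_inv_of_mem_cycleFactorsFinset
    (cycleOf_mem_cycleFactorsFinset_iff.2 (mem_support.2 hx))).symm
  have hf : c * r = f := by rw [hd.commute.eq]; exact inv_mul_cancel_right f c
  have hsplit : swap x (f x) * f = (swap x (c x) * c) * r := by rw [hcx, ← hf, mul_assoc]
  have hfr := hc.card_parts_partition_mul hd
  rw [hf] at hfr
  rw [hsplit]
  by_cases hcc : c (c x) = x
  · have hswap := hc.eq_swap_of_apply_apply_eq_self (hcx ▸ hx) hcc
    have h2 : #c.support = 2 := by
      rw [hswap, card_support_swap]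
      exact fun h => hx (hcx ▸ h.symm)
    have h1 : swap x (c x) * c = 1 := by nth_rewrite 2 [hswap]; exact swap_mul_self _ _
    rw [h1, one_mul]
    omega
  · have hg : (swap x (c x) * c).IsCycle := hc.swap_mul (hcx ▸ hx) hcc
    have hgs : (swap x (c x) * c).support = c.support \ {x} := support_swap_mul_eq c x hcc
    have hgr := hg.card_parts_partition_mul (hd.mono (hgs ▸ sdiff_subset) le_rfl)
    have hxc : x ∈ c.support := mem_support.2 (hcx ▸ hx)
    rw [hgs, card_sdiff_of_subset (singleton_subset_iff.2 hxc), card_singleton] at hgr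
    have : 1 ≤ #c.support := card_pos.2 ⟨x, hxc⟩
    omega

theorem card_parts_partition_mul_swap {σ : Perm α} {j a : α} (hja : j ≠ a) (ha : σ a = a) :
    (σ * swap j a).partition.parts.card + 1 = σ.partition.parts.card := by
  have hinv (τ : Perm α) : τ⁻¹.partition = τ.partition :=
    partition_eq_of_isConj.1 (isConj_iff_cycleType_eq.2 (cycleType_inv τ))
  have hfa : (σ * swap j a)⁻¹ a = j := by
    rw [mul_inv_rev, Perm.mul_apply, inv_eq_iff_eq.2 ha.symm, swap_inv, swap_apply_right]
  have hσ : swap a j * (σ * swap j a)⁻¹ = σ⁻¹ := by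
    rw [mul_inv_rev, swap_inv, ← mul_assoc, swap_comm, swap_mul_self, one_mul]
  have h := card_parts_partition_swap_mul (x := a) (hfa.symm ▸ hja : (σ * swap j a)⁻¹ a ≠ a)
  rwa [hfa, hσ, hinv, hinv, eq_comm] at h

end Equiv.Perm

open Equiv Equiv.Perm

noncomputable def permCastSucc (n : ℕ) : Perm (Fin n) →* Perm (Fin (n + 1)) :=
  extendDomainHom (finSuccAboveEquiv (Fin.last n))

section PermCastSucc
variable {n : ℕ}

@[simp]
lemma permCastSucc_apply_castSucc (σ : Perm (Fin n)) (i : Fin n) :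
    permCastSucc n σ i.castSucc = (σ i).castSucc := by
  simpa [permCastSucc, finSuccAboveEquiv_apply] using
    extendDomain_apply_image σ (finSuccAboveEquiv (Fin.last n)) i

@[simp]
lemma permCastSucc_apply_last (σ : Perm (Fin n)) : permCastSucc n σ (Fin.last n) = Fin.last n :=
  extendDomain_apply_not_subtype σ _ (by simp)

lemma permCastSucc_injective : Function.Injective (permCastSucc n) :=
  extendDomainHom_injective _

lemma cycleType_permCastSucc (σ : Perm (Fin n)) : (permCastSucc n σ).cycleType = σ.cycleType :=
  cycleType_extendDomain _

lemma permCastSucc_swap (i j : Fin n) :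
    permCastSucc n (swap i j) = swap i.castSucc j.castSucc := by
  ext x
  induction x using Fin.lastCases with
  | last => simp [swap_apply_of_ne_of_ne, (Fin.castSucc_lt_last _).ne']
  | cast x => simp [swap_apply_def, apply_ite Fin.castSucc]

lemma exists_permCastSucc_eq {τ : Perm (Fin (n + 1))} (hτ : τ (Fin.last n) = Fin.last n) :
    ∃ σ, permCastSucc n σ = τ := by
  have hmem (x : Fin (n + 1)) : τ x ≠ Fin.last n ↔ x ≠ Fin.last n := by
    simpa only [hτ] using τ.injective.ne_iff (x := x) (y := Fin.last n)
  refine ⟨(finSuccAboveEquiv (Fin.last n)).permCongr.symm (τ.subtypePerm hmem), ?_⟩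
  ext x
  induction x using Fin.lastCases with
  | last => simp [hτ]
  | cast x => simp [finSuccAboveEquiv_apply, permCongr_apply, finSuccAboveEquiv_symm_apply_last]

lemma permCastSucc_mul_swap_inv_apply_last (σ : Perm (Fin n)) (j : Fin n) :
    (permCastSucc n σ * swap j.castSucc (Fin.last n))⁻¹ (Fin.last n) = j.castSucc := by
  rw [mul_inv_rev, Perm.mul_apply, ← map_inv, permCastSucc_apply_last, swap_inv, swap_apply_right]

lemma permCastSucc_mul_swap_injective :
    Function.Injective
      fun p : Perm (Fin n) × Fin n => permCastSucc n p.1 * swap p.2.castSucc (Fin.last n) := by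
  intro p q h
  dsimp only at h
  have hj : p.2 = q.2 := Fin.castSucc_injective n <| by
    simpa only [permCastSucc_mul_swap_inv_apply_last] using congrArg (· ⁻¹ (Fin.last n)) h
  rw [hj, mul_left_inj] at h
  exact Prod.ext (permCastSucc_injective h) hj

lemma exists_permCastSucc_mul_swap_eq {τ : Perm (Fin (n + 1))}
    (hτ : τ (Fin.last n) ≠ Fin.last n) :
    ∃ (σ : Perm (Fin n)) (j : Fin n), permCastSucc n σ * swap j.castSucc (Fin.last n) = τ := by
  obtain ⟨j, hj⟩ := Fin.exists_castSucc_eq.2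
    (fun h => hτ (Perm.inv_eq_iff_eq.1 h).symm : τ⁻¹ (Fin.last n) ≠ Fin.last n)
  obtain ⟨σ, hσ⟩ := exists_permCastSucc_eq (τ := τ * swap j.castSucc (Fin.last n))
    (by rw [Perm.mul_apply, swap_apply_right, hj]; exact τ.apply_symm_apply _)
  exact ⟨σ, j, by rw [hσ, mul_assoc, swap_mul_self, mul_one]⟩

end PermCastSucc

noncomputable def permCastSuccRingHom (n : ℕ) :
    MonoidAlgebra ℤ (Perm (Fin n)) →+* MonoidAlgebra ℤ (Perm (Fin (n + 1))) :=
  MonoidAlgebra.mapDomainRingHom ℤ (permCastSucc n)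

local notation "of" => MonoidAlgebra.of ℤ (Perm (Fin _))

section JucysMurphy
variable {n : ℕ}

@[simp]
lemma permCastSuccRingHom_of (σ : Perm (Fin n)) :
    permCastSuccRingHom n (of σ) = of (permCastSucc n σ) := by
  simp [permCastSuccRingHom]

lemma JM_eq_sum_Iio (i : Fin n) : JM n i = ∑ j ∈ Iio i, of (swap j i) := by
  rw [JM, filter_gt_eq_Iio]

lemma permCastSuccRingHom_JM (i : Fin n) :
    permCastSuccRingHom n (JM n i) = JM (n + 1) i.castSucc := by
  rw [JM_eq_sum_Iio, JM_eq_sum_Iio, map_sum, Fin.sum_Iio_castSucc]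
  simp only [permCastSuccRingHom_of, permCastSucc_swap]

lemma JM_last : JM (n + 1) (Fin.last n) = ∑ j : Fin n, of (swap j.castSucc (Fin.last n)) := by
  simp [JM_eq_sum_Iio, Fin.Iio_last_eq_map]

end JucysMurphy

section Kappa
variable {n : ℕ}

lemma kappa_eq_card_parts_partition (σ : Perm (Fin n)) : kappa σ = σ.partition.parts.card := by
  simp [kappa, parts_partition, sum_cycleType]

lemma kappa_mul_swap {σ : Perm (Fin n)} {j a : Fin n} (hja : j ≠ a) (ha : σ a = a) :
    kappa (σ * swap j a) + 1 = kappa σ := by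
  simpa only [kappa_eq_card_parts_partition] using card_parts_partition_mul_swap hja ha

lemma kappa_permCastSucc (σ : Perm (Fin n)) : kappa (permCastSucc n σ) = kappa σ + 1 := by
  have := σ.support.card_le_univ
  rw [Fintype.card_fin] at this
  rw [kappa, kappa, cycleType_permCastSucc, sum_cycleType]
  omega

lemma kappa_permCastSucc_mul_swap (σ : Perm (Fin n)) (j : Fin n) :
    kappa (permCastSucc n σ * swap j.castSucc (Fin.last n)) = kappa σ := by
  have h := kappa_mul_swap (Fin.castSucc_lt_last j).ne (permCastSucc_apply_last σ)
  rw [kappa_permCastSucc] at h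
  omega

lemma kappa_eq_self_iff {σ : Perm (Fin n)} : kappa σ = n ↔ σ = 1 := by
  refine ⟨fun h => ?_, fun h => by simp [h, kappa]⟩
  have h2 : Multiset.card σ.cycleType * 2 ≤ σ.cycleType.sum := by
    simpa using Multiset.card_nsmul_le_sum fun _ => two_le_of_mem_cycleType
  have := σ.support.card_le_univ
  rw [Fintype.card_fin] at this
  rw [kappa, sum_cycleType] at h
  rw [sum_cycleType] at h2
  rw [← card_cycleType_eq_zero]
  omega

end Kappa

noncomputable def cycleSum (n k : ℕ) : MonoidAlgebra ℤ (Perm (Fin n)) :=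
  ∑ σ ∈ univ.filter (fun σ : Perm (Fin n) => (kappa σ : ℤ) = (n : ℤ) - k),
    MonoidAlgebra.of ℤ (Perm (Fin n)) σ

section CycleSum
variable {n k : ℕ}

lemma cycleSum_zero : cycleSum n 0 = 1 := by
  have : univ.filter (fun σ : Perm (Fin n) => (kappa σ : ℤ) = n - (0 : ℕ)) = {1} := by
    ext σ
    simp [← kappa_eq_self_iff]
  rw [cycleSum, this, sum_singleton, map_one]

lemma cycleSum_of_lt (h : n < k) : cycleSum n k = 0 := by
  refine sum_eq_zero fun σ hσ => absurd (mem_filter.1 hσ).2 ?_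
  omega

lemma sum_filter_fixing_last :
    ∑ τ ∈ univ.filter (fun τ : Perm (Fin (n + 1)) =>
        (kappa τ : ℤ) = (n + 1 : ℕ) - (k + 1 : ℕ) ∧ τ (Fin.last n) = Fin.last n), of τ =
      permCastSuccRingHom n (cycleSum n (k + 1)) := by
  rw [cycleSum, map_sum]
  symm
  refine sum_bij (fun σ _ => permCastSucc n σ) (fun σ hσ => ?_)
    (fun _ _ _ _ h => permCastSucc_injective h) (fun τ hτ => ?_) (fun σ _ => permCastSuccRingHom_of σ)
  · simp only [mem_filter, mem_univ, true_and, kappa_permCastSucc, permCastSucc_apply_last,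
      and_true] at hσ ⊢
    push_cast at hσ ⊢
    omega
  · simp only [mem_filter, mem_univ, true_and] at hτ
    obtain ⟨σ, rfl⟩ := exists_permCastSucc_eq hτ.2
    refine ⟨σ, ?_, rfl⟩
    have := hτ.1
    simp only [mem_filter, mem_univ, true_and, kappa_permCastSucc] at this ⊢
    push_cast at this ⊢
    omega

lemma sum_filter_moving_last :
    ∑ τ ∈ univ.filter (fun τ : Perm (Fin (n + 1)) =>
        (kappa τ : ℤ) = (n + 1 : ℕ) - (k + 1 : ℕ) ∧ τ (Fin.last n) ≠ Fin.last n), of τ =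
      permCastSuccRingHom n (cycleSum n k) * JM (n + 1) (Fin.last n) := by
  rw [cycleSum, map_sum, JM_last, sum_mul_sum, ← sum_product']
  symm
  refine sum_bij (fun p _ => permCastSucc n p.1 * swap p.2.castSucc (Fin.last n))
    (fun p hp => ?_) (fun p _ q _ h => permCastSucc_mul_swap_injective h) (fun τ hτ => ?_)
    (fun p _ => ?_)
  · simp only [mem_product, mem_filter, mem_univ, and_true, true_and,
      kappa_permCastSucc_mul_swap] at hp ⊢
    refine ⟨by push_cast at hp ⊢; omega, ?_⟩
    simp [(Fin.castSucc_lt_last (p.1 p.2)).ne]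
  · simp only [mem_filter, mem_univ, true_and] at hτ
    obtain ⟨σ, j, rfl⟩ := exists_permCastSucc_mul_swap_eq hτ.2
    refine ⟨(σ, j), ?_, rfl⟩
    have := hτ.1
    simp only [mem_product, mem_filter, mem_univ, and_true, true_and,
      kappa_permCastSucc_mul_swap] at this ⊢
    push_cast at this ⊢
    omega
  · rw [permCastSuccRingHom_of, ← map_mul]

lemma cycleSum_succ_succ :
    cycleSum (n + 1) (k + 1) = permCastSuccRingHom n (cycleSum n (k + 1))
      + permCastSuccRingHom n (cycleSum n k) * JM (n + 1) (Fin.last n) := by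
  rw [cycleSum, ← sum_filter_add_sum_filter_not _ (fun τ => τ (Fin.last n) = Fin.last n),
    filter_filter, filter_filter, sum_filter_fixing_last, sum_filter_moving_last]

end CycleSum

/-- `e_k(J_1,…,J_n)` is the sum of all permutations of `S_n` with exactly `n - k`
cycles (fixed points included). -/
theorem esymm_jucysMurphy (n k : ℕ) :
    eEval k (JM n) =
      ∑ σ ∈ Finset.univ.filter (fun σ : Equiv.Perm (Fin n) => (kappa σ : ℤ) = (n : ℤ) - k),
        MonoidAlgebra.of ℤ (Equiv.Perm (Fin n)) σ := by
  change eEval k (JM n) = cycleSum n k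
  induction n generalizing k with
  | zero =>
    rcases k with _ | k
    · rw [eEval_zero, cycleSum_zero]
    · rw [eEval_of_lt _ k.succ_pos, cycleSum_of_lt k.succ_pos]
  | succ n ih =>
    rcases k with _ | k
    · rw [eEval_zero, cycleSum_zero]
    · have hJM : (fun i : Fin n => JM (n + 1) i.castSucc) =
          fun i => permCastSuccRingHom n (JM n i) :=
        funext fun i => (permCastSuccRingHom_JM i).symm
      rw [eEval_succ, hJM, ← map_eEval, ← map_eEval, ih, ih, cycleSum_succ_succ]
end

section
/- For any symmetric polynomial F in n variables, the element F(J_1,...,J_n) lies in the center of the group algebra Z[S_n]. -/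
open Finset
open scoped Classical

/-- Evaluation of a multivariate polynomial at a family of elements of a
(possibly noncommutative) ring, multiplying the variables in increasing order. -/
noncomputable def mvEval {n : ℕ} {A : Type*} [Ring A]
    (F : MvPolynomial (Fin n) ℤ) (g : Fin n → A) : A :=
  ∑ d ∈ F.support, F.coeff d • ((List.finRange n).map (fun i => g i ^ d i)).prod

/-! The Jucys–Murphy elements commute pairwise, so `P ↦ P(J_1, …, J_n)` is a ring homomorphism
`ψ` on `ℤ[X_1, …, X_n]`. For an adjacent transposition `s = (i i+1)` one has
`s J_i = J_{i+1} s - 1`, `s J_{i+1} = J_i s + 1` and `s J_j = J_j s` for `j ≠ i, i+1`, so `s`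
commutes with `ψ (X_i + X_{i+1})`, `ψ (X_i X_{i+1})` and `ψ X_j`. These three kinds of
polynomials generate every elementary symmetric polynomial, hence every symmetric one: the
`esymm` are the coefficients of `∏_j (t + X_j)`, where `(t + X_i)(t + X_{i+1})` expands to
`t² + (X_i + X_{i+1}) t + X_i X_{i+1}`. So `ψ F` commutes with the adjacent transpositions,
which generate `S_n`. -/

open scoped IsMulCommutative
open Equiv MonoidAlgebra

namespace MvPolynomial

variable {σ R A : Type*}

theorem esymm_mem_adjoin_swapInvariant [CommSemiring R] [Fintype σ] {a b : σ} (hab : a ≠ b)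
    (k : ℕ) :
    esymm σ R k ∈ Algebra.adjoin R (X '' {a, b}ᶜ ∪ {X a + X b, X a * X b}) := by
  set B := Algebra.adjoin R (X '' {a, b}ᶜ ∪ {X a + X b, X a * X b} : Set (MvPolynomial σ R))
  have hC : ∀ p ∈ B, (Polynomial.C p : Polynomial (MvPolynomial σ R)) ∈
      Polynomial.lifts (algebraMap B (MvPolynomial σ R)) := fun p hp =>
    Polynomial.C'_mem_lifts ⟨⟨p, hp⟩, rfl⟩
  have hX := Polynomial.X_mem_lifts (algebraMap B (MvPolynomial σ R))
  have hpair : (Polynomial.X + Polynomial.C (X a)) * (Polynomial.X + Polynomial.C (X b)) =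
      Polynomial.X ^ 2 + Polynomial.C (X a + X b) * Polynomial.X +
        Polynomial.C (X a * X b : MvPolynomial σ R) := by
    simp only [map_add, map_mul]; ring
  have hprod : ∏ i, (Polynomial.X + Polynomial.C (X i : MvPolynomial σ R)) ∈
      Polynomial.lifts (algebraMap B (MvPolynomial σ R)) := by
    rw [← mul_prod_erase _ _ (mem_univ a),
      ← mul_prod_erase _ _ (mem_erase.2 ⟨hab.symm, mem_univ b⟩), ← mul_assoc, hpair]
    refine mul_mem (add_mem (add_mem (pow_mem hX 2) (mul_mem (hC _ ?_) hX)) (hC _ ?_))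
      (prod_mem fun i hi => add_mem hX (hC _ (Algebra.subset_adjoin (Or.inl ⟨i, ?_, rfl⟩))))
    · exact Algebra.subset_adjoin (Or.inr (Or.inl rfl))
    · exact Algebra.subset_adjoin (Or.inr (Or.inr rfl))
    · simp only [mem_erase] at hi
      simp [hi.1, hi.2.1]
  rcases le_or_gt k (Fintype.card σ) with hk | hk
  · obtain ⟨c, hc⟩ := (Polynomial.lifts_iff_coeff_lifts _).1 hprod (Fintype.card σ - k)
    rw [prod_X_add_C_coeff R σ _ (Nat.sub_le _ _), Nat.sub_sub_self hk] at hc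
    exact hc ▸ c.2
  · rw [esymm, powersetCard_eq_empty.2 (by simpa using hk), sum_empty]
    exact zero_mem B

theorem IsSymmetric.mem_adjoin_swapInvariant [CommRing R] [Fintype σ] {a b : σ} (hab : a ≠ b)
    {F : MvPolynomial σ R} (hF : F.IsSymmetric) :
    F ∈ Algebra.adjoin R (X '' {a, b}ᶜ ∪ {X a + X b, X a * X b}) := by
  obtain ⟨G, hG⟩ := esymmAlgHom_surjective R le_rfl (⟨F, hF⟩ : symmetricSubalgebra σ R)
  have hFG : F = aeval (fun i : Fin (Fintype.card σ) => esymm σ R (i + 1)) G := by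
    rw [← esymmAlgHom_apply, hG]
  rw [hFG]
  refine Algebra.adjoin_le ?_ ((Algebra.adjoin_range_eq_range_aeval R _).ge ⟨G, rfl⟩)
  rintro _ ⟨i, rfl⟩
  exact esymm_mem_adjoin_swapInvariant hab _

section CommutingFamily

variable [CommSemiring R] [Semiring A] [Algebra R A] {g : σ → A}

theorem isMulCommutative_adjoin_range (hg : ∀ i j, Commute (g i) (g j)) :
    IsMulCommutative (Algebra.adjoin R (Set.range g)) :=
  Algebra.isMulCommutative_adjoin R <| by rintro _ ⟨i, rfl⟩ _ ⟨j, rfl⟩; exact (hg i j).eq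

variable (R g) in
noncomputable def aevalOfCommute (hg : ∀ i j, Commute (g i) (g j)) :
    MvPolynomial σ R →ₐ[R] A :=
  have := isMulCommutative_adjoin_range (R := R) hg
  (Algebra.adjoin R (Set.range g)).val.comp
    (aeval fun i => ⟨g i, Algebra.subset_adjoin ⟨i, rfl⟩⟩)

@[simp]
theorem aevalOfCommute_X (hg : ∀ i j, Commute (g i) (g j)) (i : σ) :
    aevalOfCommute R g hg (X i) = g i := by
  have := isMulCommutative_adjoin_range (R := R) hg
  simp [aevalOfCommute]

end CommutingFamily

end MvPolynomial

theorem mvEval_eq_aevalOfCommute {n : ℕ} {A : Type*} [Ring A] (F : MvPolynomial (Fin n) ℤ)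
    (g : Fin n → A) (hg : ∀ i j, Commute (g i) (g j)) :
    mvEval F g = MvPolynomial.aevalOfCommute ℤ g hg F := by
  have := MvPolynomial.isMulCommutative_adjoin_range (R := ℤ) hg
  rw [MvPolynomial.aevalOfCommute, AlgHom.comp_apply, MvPolynomial.aeval_def,
    MvPolynomial.eval₂_eq', map_sum, mvEval]
  refine sum_congr rfl fun d _ => ?_
  rw [map_mul, AlgHom.commutes, ← Algebra.smul_def, Fin.prod_univ_def, map_list_prod,
    List.map_map]
  rfl

theorem MonoidAlgebra.mem_center_of_commute_of {k G : Type*} [CommSemiring k] [Monoid G]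
    {S : Set G} (hS : Submonoid.closure S = ⊤) {x : MonoidAlgebra k G}
    (hx : ∀ g ∈ S, Commute (of k G g) x) : x ∈ Set.center (MonoidAlgebra k G) := by
  have hof : ∀ g, Commute (of k G g) x := by
    intro g
    induction (hS ▸ Submonoid.mem_top g : g ∈ Submonoid.closure S)
      using Submonoid.closure_induction with
    | mem g hg => exact hx g hg
    | one => rw [map_one]; exact Commute.one_left x
    | mul g h _ _ hg hh => rw [map_mul]; exact hg.mul_left hh
  refine Semigroup.mem_center_iff.2 fun y => ?_
  induction y using MonoidAlgebra.induction_on with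
  | of g => exact hof g
  | add y z hy hz => exact Commute.add_left hy hz
  | smul r y hy => exact Commute.smul_left hy r

theorem Equiv.Perm.mclosure_swap_adjacent (n : ℕ) :
    Submonoid.closure {σ : Perm (Fin n) | ∃ i k : Fin n, (k : ℕ) = i + 1 ∧ σ = swap i k} =
      ⊤ := by
  cases n with
  | zero => exact Subsingleton.elim _ _
  | succ m =>
    refine top_unique ((mclosure_swap_castSucc_succ m).ge.trans (Submonoid.closure_mono ?_))
    rintro _ ⟨i, rfl⟩
    exact ⟨i.castSucc, i.succ, by simp, rfl⟩

theorem Equiv.swap_apply_lt_iff {α : Type*} [LinearOrder α] {x y j b : α} (hx : x < j)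
    (hy : y < j) : swap x y b < j ↔ b < j := by
  rw [swap_apply_def]
  split_ifs with h₁ h₂ <;> subst_vars <;> simp [*]

section JucysMurphy

variable {n : ℕ}

theorem commute_of_JM_of_stable {σ : Perm (Fin n)} {j : Fin n} (hj : σ j = j)
    (hlt : ∀ b, σ b < j ↔ b < j) : Commute (of ℤ _ σ) (JM n j) := by
  rw [JM, Commute, SemiconjBy, mul_sum, sum_mul]
  refine sum_equiv σ (fun b => by simp [hlt]) fun b _ => ?_
  rw [← map_mul, ← map_mul, mul_swap_eq_swap_mul, hj]

theorem JM_commute (i j : Fin n) : Commute (JM n i) (JM n j) := by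
  wlog hij : i < j generalizing i j
  · rcases (not_lt.1 hij).lt_or_eq with h | rfl
    · exact (this j i h).symm
    · exact Commute.refl _
  refine Commute.sum_left _ _ _ fun a ha => ?_
  have haj : a < j := (mem_filter.1 ha).2.trans hij
  exact commute_of_JM_of_stable (swap_apply_of_ne_of_ne haj.ne' hij.ne') fun _ =>
    swap_apply_lt_iff haj hij

section Adjacent

variable {i k : Fin n}

theorem JM_eq_of_adjacent (hk : (k : ℕ) = i + 1) :
    JM n k = (∑ a ∈ univ.filter (· < i), of ℤ _ (swap a k)) + of ℤ _ (swap i k) := by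
  have hfilter : univ.filter (· < k) = insert i (univ.filter (· < i)) := by
    ext b
    simp only [mem_filter, mem_univ, true_and, mem_insert, Fin.lt_def, Fin.ext_iff, hk]
    omega
  rw [JM, hfilter, sum_insert (by simp), add_comm]

theorem of_swap_mul_JM_left (hk : (k : ℕ) = i + 1) :
    of ℤ _ (swap i k) * JM n i = JM n k * of ℤ _ (swap i k) - 1 := by
  have hik : i < k := Fin.lt_def.2 (by omega)
  rw [JM_eq_of_adjacent hk, add_mul, ← map_mul, swap_mul_self, map_one, add_sub_cancel_right,
    JM, mul_sum, sum_mul]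
  refine sum_congr rfl fun a ha => ?_
  have hai : a < i := (mem_filter.1 ha).2
  rw [← map_mul, ← map_mul, mul_swap_eq_swap_mul,
    swap_apply_of_ne_of_ne hai.ne (hai.trans hik).ne, swap_apply_left]

theorem of_swap_mul_JM_right (hk : (k : ℕ) = i + 1) :
    of ℤ _ (swap i k) * JM n k = JM n i * of ℤ _ (swap i k) + 1 := by
  have hik : i < k := Fin.lt_def.2 (by omega)
  rw [JM_eq_of_adjacent hk, mul_add, ← map_mul, swap_mul_self, map_one, JM, mul_sum, sum_mul]
  congr 1
  refine sum_congr rfl fun a ha => ?_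
  have hai : a < i := (mem_filter.1 ha).2
  rw [← map_mul, ← map_mul, mul_swap_eq_swap_mul,
    swap_apply_of_ne_of_ne hai.ne (hai.trans hik).ne, swap_apply_right]

theorem commute_of_swap_JM_of_ne (hk : (k : ℕ) = i + 1) {j : Fin n} (hji : j ≠ i)
    (hjk : j ≠ k) : Commute (of ℤ _ (swap i k)) (JM n j) := by
  refine commute_of_JM_of_stable (swap_apply_of_ne_of_ne hji hjk) fun b => ?_
  have hji' : (j : ℕ) ≠ i := Fin.val_ne_of_ne hji
  have hjk' : (j : ℕ) ≠ k := Fin.val_ne_of_ne hjk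
  rw [swap_apply_def]
  split_ifs with h₁ h₂ <;> subst_vars <;> simp only [Fin.lt_def] <;> omega

theorem commute_of_swap_JM_add (hk : (k : ℕ) = i + 1) :
    Commute (of ℤ _ (swap i k)) (JM n i + JM n k) := by
  rw [Commute, SemiconjBy, mul_add, add_mul, of_swap_mul_JM_left hk, of_swap_mul_JM_right hk]
  abel

theorem commute_of_swap_JM_mul (hk : (k : ℕ) = i + 1) :
    Commute (of ℤ _ (swap i k)) (JM n i * JM n k) := by
  calc of ℤ _ (swap i k) * (JM n i * JM n k)
      = (JM n k * of ℤ _ (swap i k) - 1) * JM n k := by rw [← mul_assoc, of_swap_mul_JM_left hk]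
    _ = JM n k * (of ℤ _ (swap i k) * JM n k) - JM n k := by noncomm_ring
    _ = JM n k * (JM n i * of ℤ _ (swap i k) + 1) - JM n k := by rw [of_swap_mul_JM_right hk]
    _ = JM n k * JM n i * of ℤ _ (swap i k) := by noncomm_ring
    _ = JM n i * JM n k * of ℤ _ (swap i k) := by rw [(JM_commute k i).eq]

end Adjacent

theorem adjoin_swapInvariant_le_comap_centralizer {i k : Fin n} (hk : (k : ℕ) = i + 1) :
    Algebra.adjoin ℤ (MvPolynomial.X '' {i, k}ᶜ ∪ {MvPolynomial.X i + MvPolynomial.X k,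
        MvPolynomial.X i * MvPolynomial.X k}) ≤
      (Subalgebra.centralizer ℤ {of ℤ _ (swap i k)}).comap
        (MvPolynomial.aevalOfCommute ℤ (JM n) JM_commute) := by
  rw [Algebra.adjoin_le_iff]
  rintro p (⟨j, hj, rfl⟩ | rfl | rfl) <;>
    simp only [SetLike.mem_coe, Subalgebra.mem_comap, Subalgebra.mem_centralizer_iff,
      Set.mem_singleton_iff, forall_eq, map_add, map_mul, MvPolynomial.aevalOfCommute_X]
  · simp only [Set.mem_compl_iff, Set.mem_insert_iff, Set.mem_singleton_iff, not_or] at hj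
    exact (commute_of_swap_JM_of_ne hk hj.1 hj.2).eq
  · exact (commute_of_swap_JM_add hk).eq
  · exact (commute_of_swap_JM_mul hk).eq

end JucysMurphy

/-- For any symmetric polynomial `F`, the element `F(J_1,…,J_n)` lies in the center
of the group algebra `ℤ[S_n]`. -/
theorem symmetric_jucysMurphy_mem_center (n : ℕ) (F : MvPolynomial (Fin n) ℤ)
    (hF : F.IsSymmetric) :
    mvEval F (JM n) ∈ Set.center (MonoidAlgebra ℤ (Equiv.Perm (Fin n))) := by
  rw [mvEval_eq_aevalOfCommute F (JM n) JM_commute]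
  refine MonoidAlgebra.mem_center_of_commute_of (Perm.mclosure_swap_adjacent n) ?_
  rintro _ ⟨i, k, hk, rfl⟩
  have hik : i ≠ k := fun h => by rw [h] at hk; omega
  exact (Subalgebra.mem_centralizer_iff ℤ).1
    (adjoin_swapInvariant_le_comap_centralizer hk (hF.mem_adjoin_swapInvariant hik)) _ rfl
end

section
/- Let σ ∈ S_n with cycle-type ρ, extended to σ' ∈ S_{n+1} fixing n+1. If j_1 and j_2 lie in distinct cycles of σ of lengths ρ_{i_1} and ρ_{i_2}, then (j_2 n+1)·(j_1 n+1)·σ' has cycle-type ρ \ (ρ_{i_1}, ρ_{i_2}) ∪ (ρ_{i_1} + ρ_{i_2} + 1). -/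
open Finset
open scoped Classical

/-- The cycle type of a permutation including its fixed points (as parts equal to 1),
i.e. the partition of `n` recording all cycle lengths. -/
def fullCycleType {n : ℕ} (σ : Equiv.Perm (Fin n)) : Multiset ℕ :=
  σ.cycleType + Multiset.replicate (n - σ.cycleType.sum) 1

/-- The canonical extension `σ'` of a permutation `σ ∈ S_n` to `S_{n+1}`,
fixing the last point `n+1`. -/
noncomputable def ext {n : ℕ} (σ : Equiv.Perm (Fin n)) : Equiv.Perm (Fin (n+1)) :=
  σ.viaFintypeEmbedding Fin.castSuccEmb


namespace AuxCT

open Equiv Function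

variable {α : Type*} [Fintype α] [DecidableEq α]

lemma mem_periodicPts (f : Equiv.Perm α) (x : α) : x ∈ Function.periodicPts f :=
  ⟨orderOf f, orderOf_pos f, by
    simp [Function.IsPeriodicPt, Function.IsFixedPt, ← Equiv.Perm.coe_pow,
      pow_orderOf_eq_one]⟩

lemma mp_pos (f : Equiv.Perm α) (x : α) : 0 < Function.minimalPeriod f x :=
  Function.minimalPeriod_pos_of_mem_periodicPts (mem_periodicPts f x)

lemma mp_iterate (f : Equiv.Perm α) (x : α) (m : ℕ) :
    Function.minimalPeriod f (f^[m] x) = Function.minimalPeriod f x :=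
  Function.minimalPeriod_apply_iterate (mem_periodicPts f x) m

lemma sameCycle_iterate (f : Equiv.Perm α) (x : α) (m : ℕ) :
    f.SameCycle x (f^[m] x) :=
  ⟨(m : ℤ), by rw [zpow_natCast]; rfl⟩

lemma sameCycle_iff_exists_lt (f : Equiv.Perm α) (x y : α) :
    f.SameCycle x y ↔ ∃ i < Function.minimalPeriod f x, f^[i] x = y := by
  constructor
  · intro hxy
    obtain ⟨i, -, hi⟩ := hxy.exists_pow_eq'
    refine ⟨i % Function.minimalPeriod f x, Nat.mod_lt _ (mp_pos f x), ?_⟩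
    rw [Function.iterate_mod_minimalPeriod_eq]
    exact hi
  · rintro ⟨i, -, rfl⟩
    exact sameCycle_iterate f x i

lemma mp_eq_of_sameCycle {f : Equiv.Perm α} {x y : α} (hxy : f.SameCycle x y) :
    Function.minimalPeriod f x = Function.minimalPeriod f y := by
  obtain ⟨i, -, rfl⟩ := (sameCycle_iff_exists_lt f x y).1 hxy
  exact (mp_iterate f x i).symm

lemma card_sameCycle (f : Equiv.Perm α) (x : α) :
    (univ.filter fun y => f.SameCycle x y).card = Function.minimalPeriod f x := by
  have himg : (univ.filter fun y => f.SameCycle x y)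
      = (Finset.range (Function.minimalPeriod f x)).image (fun i => f^[i] x) := by
    ext y
    simp only [mem_filter, mem_univ, true_and, Finset.mem_image, Finset.mem_range]
    rw [sameCycle_iff_exists_lt]
  rw [himg, Finset.card_image_of_injOn, Finset.card_range]
  intro a ha b hb hab
  exact Function.iterate_injOn_Iio_minimalPeriod
    (by simpa using ha) (by simpa using hb) hab

lemma card_support_cycleOf' (f : Equiv.Perm α) {x : α} (hx : x ∈ f.support) :
    (f.cycleOf x).support.card = Function.minimalPeriod f x := by
  rw [← card_sameCycle f x]
  congr 1
  ext y
  simp only [Finset.mem_filter, Finset.mem_univ, true_and,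
    Equiv.Perm.mem_support_cycleOf_iff]
  exact ⟨fun hy => hy.1, fun hy => ⟨hy, hx⟩⟩

/-- Counting points with a given minimal period. -/
lemma count_full (f : Equiv.Perm α) (k : ℕ) :
    (univ.filter fun x => Function.minimalPeriod f x = k).card
      = k * (f.cycleType
          + Multiset.replicate (Fintype.card α - f.cycleType.sum) 1).count k := by
  rcases Nat.eq_zero_or_pos k with rfl | hk0
  · rw [Finset.filter_false_of_mem, Finset.card_empty, zero_mul]
    intro x _
    exact (mp_pos f x).ne'
  rcases eq_or_ne k 1 with rfl | hk1
  · have h1 : (univ.filter fun x => Function.minimalPeriod f x = 1)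
        = univ.filter fun x => ¬ (f x ≠ x) := by
      ext x
      simp only [Finset.mem_filter, Finset.mem_univ, true_and, not_not]
      rw [Function.minimalPeriod_eq_one_iff_isFixedPt]
      exact Iff.rfl
    rw [h1, Multiset.count_add, Multiset.count_replicate, if_pos rfl]
    have hct : f.cycleType.count 1 = 0 := by
      rw [Multiset.count_eq_zero]
      intro hmem
      have := Equiv.Perm.two_le_of_mem_cycleType hmem
      omega
    have hsupp : f.support = univ.filter fun x => f x ≠ x := by
      ext x; simp [Equiv.Perm.mem_support]
    have hsum : f.cycleType.sum = f.support.card := Equiv.Perm.sum_cycleType f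
    have hcards := Finset.card_filter_add_card_filter_not
      (s := (univ : Finset α)) (p := fun x => f x ≠ x)
    rw [Finset.card_univ] at hcards
    rw [hct, hsum, hsupp]
    omega
  -- now 2 ≤ k
  have hk2 : 2 ≤ k := by omega
  have hrep : (Multiset.replicate (Fintype.card α - f.cycleType.sum) 1).count k = 0 := by
    rw [Multiset.count_replicate, if_neg (fun hh => hk1 hh.symm)]
  rw [Multiset.count_add, hrep, add_zero]
  have hBU : (univ.filter fun x => Function.minimalPeriod f x = k)
      = (f.cycleFactorsFinset.filter fun c => k = c.support.card).biUnion
          fun c => c.support := by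
    ext x
    simp only [mem_filter, mem_univ, true_and, Finset.mem_biUnion]
    constructor
    · intro hmp
      have hxs : x ∈ f.support := by
        rw [Equiv.Perm.mem_support]
        intro hfx
        have : Function.minimalPeriod f x = 1 :=
          Function.minimalPeriod_eq_one_iff_isFixedPt.2 hfx
        omega
      refine ⟨f.cycleOf x, ⟨Equiv.Perm.cycleOf_mem_cycleFactorsFinset_iff.2 hxs, ?_⟩, ?_⟩
      · rw [card_support_cycleOf' f hxs, hmp]
      · rw [Equiv.Perm.mem_support_cycleOf_iff]
        exact ⟨Equiv.Perm.SameCycle.refl f x, hxs⟩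
    · rintro ⟨c, ⟨hc, hck⟩, hxc⟩
      have hcyc : c = f.cycleOf x :=
        Equiv.Perm.cycle_is_cycleOf hxc hc
      have hxs : x ∈ f.support := by
        rw [← Equiv.Perm.cycleOf_mem_cycleFactorsFinset_iff, ← hcyc]
        exact hc
      rw [← card_support_cycleOf' f hxs, ← hcyc, ← hck]
  rw [hBU, Finset.card_biUnion]
  · rw [Finset.sum_congr rfl fun c hc => ((Finset.mem_filter.1 hc).2).symm,
      Finset.sum_const, smul_eq_mul, mul_comm]
    congr 1
    rw [Equiv.Perm.cycleType_def, Multiset.count_map, Finset.card_def, Finset.filter_val]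
    congr 1

  · intro c hc d hd hcd
    have := (Equiv.Perm.cycleFactorsFinset_pairwise_disjoint f)
      (Finset.mem_filter.1 hc).1 (Finset.mem_filter.1 hd).1 hcd
    exact Equiv.Perm.Disjoint.disjoint_support this

lemma count_zero_full (f : Equiv.Perm α) (m : ℕ) :
    (f.cycleType + Multiset.replicate m 1).count 0 = 0 := by
  rw [Multiset.count_add, Multiset.count_replicate, if_neg (by omega), add_zero,
    Multiset.count_eq_zero]
  intro hmem
  have := Equiv.Perm.two_le_of_mem_cycleType hmem
  omega

end AuxCT

/-- If `j₁` and `j₂` lie in distinct cycles of `σ`, of lengths `ρ_{i₁}` and `ρ_{i₂}`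
(the minimal periods of `σ` at `j₁` and `j₂`), then `(j₂ n+1)·(j₁ n+1)·σ'` has the
cycle type of `σ` with the parts `ρ_{i₁}`, `ρ_{i₂}` replaced by one part
`ρ_{i₁} + ρ_{i₂} + 1`. -/
theorem cycleType_two_swaps_distinct_cycles (n : ℕ) (σ : Equiv.Perm (Fin n))
    (j₁ j₂ : Fin n) (h : ¬ σ.SameCycle j₁ j₂) :
    fullCycleType
        (Equiv.swap (Fin.castSucc j₂) (Fin.last n)
          * (Equiv.swap (Fin.castSucc j₁) (Fin.last n) * ext σ))
      = (Function.minimalPeriod (⇑σ) j₁ + Function.minimalPeriod (⇑σ) j₂ + 1) ::ₘ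
          (((fullCycleType σ).erase (Function.minimalPeriod (⇑σ) j₁)).erase
            (Function.minimalPeriod (⇑σ) j₂)) := by
  have hj : j₁ ≠ j₂ := fun he => h (he ▸ Equiv.Perm.SameCycle.refl σ j₁)
  set p₁ := Function.minimalPeriod (⇑σ) j₁ with hp₁def
  set p₂ := Function.minimalPeriod (⇑σ) j₂ with hp₂def
  have hp₁ : 0 < p₁ := AuxCT.mp_pos σ j₁
  have hp₂ : 0 < p₂ := AuxCT.mp_pos σ j₂
  set τ : Equiv.Perm (Fin (n+1)) :=
    Equiv.swap (Fin.castSucc j₂) (Fin.last n)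
      * (Equiv.swap (Fin.castSucc j₁) (Fin.last n) * ext σ) with hτdef
  have heN : ∀ y : Fin n, Fin.castSucc y ≠ Fin.last n :=
    fun y => (Fin.castSucc_lt_last y).ne
  have hexte : ∀ y : Fin n, ext σ (Fin.castSucc y) = Fin.castSucc (σ y) := by
    intro y
    have := Equiv.Perm.viaFintypeEmbedding_apply_image σ Fin.castSuccEmb y
    simpa [_root_.ext] using this
  have hextN : ext σ (Fin.last n) = Fin.last n := by
    apply Equiv.Perm.viaFintypeEmbedding_apply_notMem_range
    rintro ⟨y, hy⟩
    exact heN y (by simpa using hy)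
  have hτN : τ (Fin.last n) = Fin.castSucc j₁ := by
    rw [hτdef]
    simp only [Equiv.Perm.mul_apply, hextN]
    rw [Equiv.swap_apply_right, Equiv.swap_apply_of_ne_of_ne
      (by simpa [Fin.castSucc_inj] using hj) (heN j₁)]
  have hτe : ∀ y : Fin n, σ y ≠ j₁ → σ y ≠ j₂ →
      τ (Fin.castSucc y) = Fin.castSucc (σ y) := by
    intro y h1 h2
    rw [hτdef]
    simp only [Equiv.Perm.mul_apply, hexte]
    rw [Equiv.swap_apply_of_ne_of_ne (by simpa [Fin.castSucc_inj] using h1) (heN _),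
      Equiv.swap_apply_of_ne_of_ne (by simpa [Fin.castSucc_inj] using h2) (heN _)]
  have hτe1 : ∀ y : Fin n, σ y = j₁ → τ (Fin.castSucc y) = Fin.castSucc j₂ := by
    intro y h1
    rw [hτdef]
    simp only [Equiv.Perm.mul_apply, hexte, h1]
    rw [Equiv.swap_apply_left, Equiv.swap_apply_right]
  have hτe2 : ∀ y : Fin n, σ y = j₂ → τ (Fin.castSucc y) = Fin.last n := by
    intro y h2
    rw [hτdef]
    simp only [Equiv.Perm.mul_apply, hexte, h2]
    rw [Equiv.swap_apply_of_ne_of_ne (by simpa [Fin.castSucc_inj] using hj.symm) (heN _),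
      Equiv.swap_apply_left]
  -- points outside the two distinguished cycles
  have hout : ∀ y : Fin n, ¬ σ.SameCycle j₁ y → ¬ σ.SameCycle j₂ y →
      Function.minimalPeriod (⇑τ) (Fin.castSucc y) = Function.minimalPeriod (⇑σ) y := by
    intro y h1 h2
    have hiter : ∀ m : ℕ, (⇑τ)^[m] (Fin.castSucc y) = Fin.castSucc ((⇑σ)^[m] y) := by
      intro m
      induction m with
      | zero => rfl
      | succ m ih =>
        rw [Function.iterate_succ_apply', ih, Function.iterate_succ_apply']
        refine hτe _ ?_ ?_
        · intro hc
          apply h1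
          have hs := AuxCT.sameCycle_iterate σ y (m+1)
          rw [Function.iterate_succ_apply', hc] at hs
          exact hs.symm
        · intro hc
          apply h2
          have hs := AuxCT.sameCycle_iterate σ y (m+1)
          rw [Function.iterate_succ_apply', hc] at hs
          exact hs.symm
    have hfwd : Function.minimalPeriod (⇑τ) (Fin.castSucc y)
        ∣ Function.minimalPeriod (⇑σ) y := by
      apply Function.IsPeriodicPt.minimalPeriod_dvd
      show (⇑τ)^[_] _ = _
      rw [hiter, Function.iterate_minimalPeriod]
    have hbwd : Function.minimalPeriod (⇑σ) y
        ∣ Function.minimalPeriod (⇑τ) (Fin.castSucc y) := by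
      apply Function.IsPeriodicPt.minimalPeriod_dvd
      have hit := Function.iterate_minimalPeriod (f := ⇑τ) (x := Fin.castSucc y)
      rw [hiter] at hit
      exact Fin.castSucc_injective n hit
    exact Nat.dvd_antisymm hfwd hbwd
  -- the big cycle through the last point
  have hA1 : ∀ i, i < p₁ → (⇑τ)^[i+1] (Fin.last n) = Fin.castSucc ((⇑σ)^[i] j₁) := by
    intro i
    induction i with
    | zero => intro _; simpa using hτN
    | succ i ih =>
      intro hi
      have ih' := ih (by omega)
      rw [Function.iterate_succ_apply' (⇑τ) (i+1), ih',
        Function.iterate_succ_apply' (⇑σ) i]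
      refine hτe _ ?_ ?_
      · intro hc
        have hii : (⇑σ)^[i+1] j₁ = (⇑σ)^[0] j₁ := by
          rw [Function.iterate_succ_apply', hc]; rfl
        have := Function.iterate_injOn_Iio_minimalPeriod (f := ⇑σ) (x := j₁)
          (Set.mem_Iio.2 hi) (Set.mem_Iio.2 hp₁) hii
        omega
      · intro hc
        apply h
        have hs := AuxCT.sameCycle_iterate σ j₁ (i+1)
        rw [Function.iterate_succ_apply', hc] at hs
        exact hs
  have hmid : (⇑τ)^[p₁+1] (Fin.last n) = Fin.castSucc j₂ := by
    have h1 := hA1 (p₁-1) (by omega)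
    have e1 : (⇑τ)^[p₁+1] (Fin.last n) = τ ((⇑τ)^[(p₁-1)+1] (Fin.last n)) := by
      rw [show p₁ + 1 = ((p₁-1)+1)+1 by omega, Function.iterate_succ_apply']
    rw [e1, h1]
    apply hτe1
    have hit := Function.iterate_minimalPeriod (f := ⇑σ) (x := j₁)
    rw [show Function.minimalPeriod (⇑σ) j₁ = (p₁-1)+1 by omega,
      Function.iterate_succ_apply'] at hit
    exact hit
  have hA2 : ∀ i, i < p₂ → (⇑τ)^[p₁+1+i] (Fin.last n) = Fin.castSucc ((⇑σ)^[i] j₂) := by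
    intro i
    induction i with
    | zero => intro _; simpa using hmid
    | succ i ih =>
      intro hi
      have ih' := ih (by omega)
      have e1 : (⇑τ)^[p₁+1+(i+1)] (Fin.last n) = τ ((⇑τ)^[p₁+1+i] (Fin.last n)) := by
        rw [show p₁+1+(i+1) = (p₁+1+i)+1 by omega, Function.iterate_succ_apply']
      rw [e1, ih', Function.iterate_succ_apply' (⇑σ) i]
      refine hτe _ ?_ ?_
      · intro hc
        apply h
        have hs := AuxCT.sameCycle_iterate σ j₂ (i+1)
        rw [Function.iterate_succ_apply', hc] at hs
        exact hs.symm
      · intro hc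
        have hii : (⇑σ)^[i+1] j₂ = (⇑σ)^[0] j₂ := by
          rw [Function.iterate_succ_apply', hc]; rfl
        have := Function.iterate_injOn_Iio_minimalPeriod (f := ⇑σ) (x := j₂)
          (Set.mem_Iio.2 hi) (Set.mem_Iio.2 hp₂) hii
        omega
  have hAP : (⇑τ)^[p₁+p₂+1] (Fin.last n) = Fin.last n := by
    have h2 := hA2 (p₂-1) (by omega)
    have e1 : (⇑τ)^[p₁+p₂+1] (Fin.last n) = τ ((⇑τ)^[p₁+1+(p₂-1)] (Fin.last n)) := by
      rw [show p₁+p₂+1 = (p₁+1+(p₂-1))+1 by omega, Function.iterate_succ_apply']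
    rw [e1, h2]
    apply hτe2
    have hit := Function.iterate_minimalPeriod (f := ⇑σ) (x := j₂)
    rw [show Function.minimalPeriod (⇑σ) j₂ = (p₂-1)+1 by omega,
      Function.iterate_succ_apply'] at hit
    exact hit
  have hmpN : Function.minimalPeriod (⇑τ) (Fin.last n) = p₁+p₂+1 := by
    have hper : Function.IsPeriodicPt (⇑τ) (p₁+p₂+1) (Fin.last n) := hAP
    have hdvd := hper.minimalPeriod_dvd
    have hpos := AuxCT.mp_pos τ (Fin.last n)
    have hle := Nat.le_of_dvd (by omega) hdvd
    by_contra hne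
    have hlt : Function.minimalPeriod (⇑τ) (Fin.last n) < p₁+p₂+1 :=
      lt_of_le_of_ne hle hne
    have hfix : (⇑τ)^[Function.minimalPeriod (⇑τ) (Fin.last n)] (Fin.last n) = Fin.last n :=
      Function.iterate_minimalPeriod
    by_cases hmp : Function.minimalPeriod (⇑τ) (Fin.last n) ≤ p₁
    · have hh := hA1 (Function.minimalPeriod (⇑τ) (Fin.last n) - 1) (by omega)
      rw [show (Function.minimalPeriod (⇑τ) (Fin.last n) - 1) + 1
          = Function.minimalPeriod (⇑τ) (Fin.last n) by omega, hfix] at hh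
      exact (heN _) hh.symm
    · have hh := hA2 (Function.minimalPeriod (⇑τ) (Fin.last n) - p₁ - 1) (by omega)
      rw [show p₁+1+(Function.minimalPeriod (⇑τ) (Fin.last n) - p₁ - 1)
          = Function.minimalPeriod (⇑τ) (Fin.last n) by omega, hfix] at hh
      exact (heN _) hh.symm
  have hbig1 : ∀ y : Fin n, σ.SameCycle j₁ y →
      Function.minimalPeriod (⇑τ) (Fin.castSucc y) = p₁+p₂+1 := by
    intro y hy
    obtain ⟨i, hi, rfl⟩ := (AuxCT.sameCycle_iff_exists_lt σ j₁ y).1 hy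
    rw [← hA1 i hi, AuxCT.mp_iterate τ (Fin.last n) (i+1), hmpN]
  have hbig2 : ∀ y : Fin n, σ.SameCycle j₂ y →
      Function.minimalPeriod (⇑τ) (Fin.castSucc y) = p₁+p₂+1 := by
    intro y hy
    obtain ⟨i, hi, rfl⟩ := (AuxCT.sameCycle_iff_exists_lt σ j₂ y).1 hy
    rw [← hA2 i hi, AuxCT.mp_iterate τ (Fin.last n) (p₁+1+i), hmpN]
  -- finset counting
  have hc1 : (univ.filter fun y => σ.SameCycle j₁ y).card = p₁ := AuxCT.card_sameCycle σ j₁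
  have hc2 : (univ.filter fun y => σ.SameCycle j₂ y).card = p₂ := AuxCT.card_sameCycle σ j₂
  have hdisj : Disjoint (univ.filter fun y => σ.SameCycle j₁ y)
      (univ.filter fun y => σ.SameCycle j₂ y) := by
    rw [Finset.disjoint_left]
    intro y hy1 hy2
    exact h (((Finset.mem_filter.1 hy1).2).trans ((Finset.mem_filter.1 hy2).2).symm)
  have hcount_τ : ∀ k : ℕ,
      (univ.filter fun x : Fin (n+1) => Function.minimalPeriod (⇑τ) x = k).card
      = (if k = p₁+p₂+1 then p₁+p₂+1 else 0)
        + (univ.filter fun y : Fin n =>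
            (¬ σ.SameCycle j₁ y ∧ ¬ σ.SameCycle j₂ y)
              ∧ Function.minimalPeriod (⇑σ) y = k).card := by
    intro k
    have hsplit : (univ.filter fun x : Fin (n+1) => Function.minimalPeriod (⇑τ) x = k)
        = (if k = p₁+p₂+1 then
            insert (Fin.last n)
              (((univ.filter fun y => σ.SameCycle j₁ y)
                ∪ (univ.filter fun y => σ.SameCycle j₂ y)).image Fin.castSucc)
          else ∅)
          ∪ (univ.filter fun y : Fin n =>
              (¬ σ.SameCycle j₁ y ∧ ¬ σ.SameCycle j₂ y)
                ∧ Function.minimalPeriod (⇑σ) y = k).image Fin.castSucc := by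
      ext x
      induction x using Fin.lastCases with
      | last =>
        simp only [Finset.mem_filter, Finset.mem_univ, true_and, Finset.mem_union]
        rw [hmpN]
        constructor
        · intro hk
          left
          rw [if_pos hk.symm]
          exact Finset.mem_insert_self _ _
        · rintro (hx | hx)
          · by_cases hk : k = p₁+p₂+1
            · exact hk.symm
            · rw [if_neg hk] at hx
              exact absurd hx (Finset.notMem_empty _)
          · exfalso
            obtain ⟨y, -, hy⟩ := Finset.mem_image.1 hx
            exact heN y hy
      | cast y =>
        simp only [Finset.mem_filter, Finset.mem_univ, true_and, Finset.mem_union]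
        by_cases hy1 : σ.SameCycle j₁ y
        · rw [hbig1 y hy1]
          constructor
          · intro hk
            left
            rw [if_pos hk.symm]
            exact Finset.mem_insert_of_mem (Finset.mem_image_of_mem _
              (Finset.mem_union_left _ (Finset.mem_filter.2 ⟨Finset.mem_univ _, hy1⟩)))
          · rintro (hx | hx)
            · by_cases hk : k = p₁+p₂+1
              · exact hk.symm
              · rw [if_neg hk] at hx
                exact absurd hx (Finset.notMem_empty _)
            · exfalso
              obtain ⟨z, hz, hzz⟩ := Finset.mem_image.1 hx
              have hzy : z = y := Fin.castSucc_injective n hzz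
              subst hzy
              exact (Finset.mem_filter.1 hz).2.1.1 hy1
        · by_cases hy2 : σ.SameCycle j₂ y
          · rw [hbig2 y hy2]
            constructor
            · intro hk
              left
              rw [if_pos hk.symm]
              exact Finset.mem_insert_of_mem (Finset.mem_image_of_mem _
                (Finset.mem_union_right _ (Finset.mem_filter.2 ⟨Finset.mem_univ _, hy2⟩)))
            · rintro (hx | hx)
              · by_cases hk : k = p₁+p₂+1
                · exact hk.symm
                · rw [if_neg hk] at hx
                  exact absurd hx (Finset.notMem_empty _)
              · exfalso
                obtain ⟨z, hz, hzz⟩ := Finset.mem_image.1 hx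
                have hzy : z = y := Fin.castSucc_injective n hzz
                subst hzy
                exact (Finset.mem_filter.1 hz).2.1.2 hy2
          · rw [hout y hy1 hy2]
            constructor
            · intro hk
              right
              exact Finset.mem_image_of_mem _
                (Finset.mem_filter.2 ⟨Finset.mem_univ _, ⟨hy1, hy2⟩, hk⟩)
            · rintro (hx | hx)
              · exfalso
                by_cases hk : k = p₁+p₂+1
                · rw [if_pos hk] at hx
                  rcases Finset.mem_insert.1 hx with hx | hx
                  · exact heN y hx
                  · obtain ⟨z, hz, hzz⟩ := Finset.mem_image.1 hx
                    have hzy : z = y := Fin.castSucc_injective n hzz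
                    subst hzy
                    rcases Finset.mem_union.1 hz with hz | hz
                    · exact hy1 (Finset.mem_filter.1 hz).2
                    · exact hy2 (Finset.mem_filter.1 hz).2
                · rw [if_neg hk] at hx
                  exact absurd hx (Finset.notMem_empty _)
              · obtain ⟨z, hz, hzz⟩ := Finset.mem_image.1 hx
                have hzy : z = y := Fin.castSucc_injective n hzz
                subst hzy
                exact (Finset.mem_filter.1 hz).2.2
    have hdj2 : Disjoint
        (if k = p₁+p₂+1 then
            insert (Fin.last n)
              (((univ.filter fun y => σ.SameCycle j₁ y)
                ∪ (univ.filter fun y => σ.SameCycle j₂ y)).image Fin.castSucc)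
          else ∅)
        ((univ.filter fun y : Fin n =>
            (¬ σ.SameCycle j₁ y ∧ ¬ σ.SameCycle j₂ y)
              ∧ Function.minimalPeriod (⇑σ) y = k).image Fin.castSucc) := by
      split_ifs with hk
      · rw [Finset.disjoint_left]
        intro x hx hx'
        obtain ⟨z, hz, rfl⟩ := Finset.mem_image.1 hx'
        rcases Finset.mem_insert.1 hx with hx | hx
        · exact heN z hx
        · obtain ⟨w, hw, hwz⟩ := Finset.mem_image.1 hx
          have hwzz : w = z := Fin.castSucc_injective n hwz
          subst hwzz
          rcases Finset.mem_union.1 hw with hw | hw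
          · exact (Finset.mem_filter.1 hz).2.1.1 (Finset.mem_filter.1 hw).2
          · exact (Finset.mem_filter.1 hz).2.1.2 (Finset.mem_filter.1 hw).2
      · simp
    rw [hsplit, Finset.card_union_of_disjoint hdj2,
      Finset.card_image_of_injective _ (Fin.castSucc_injective n)]
    congr 1
    by_cases hk : k = p₁+p₂+1
    · rw [if_pos hk, if_pos hk]
      rw [Finset.card_insert_of_notMem, Finset.card_image_of_injective _
        (Fin.castSucc_injective n), Finset.card_union_of_disjoint hdisj, hc1, hc2]
      · rintro hx
        obtain ⟨z, -, hz⟩ := Finset.mem_image.1 hx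
        exact heN z hz
    · rw [if_neg hk, if_neg hk, Finset.card_empty]
  have hcount_σ : ∀ k : ℕ,
      (univ.filter fun y : Fin n => Function.minimalPeriod (⇑σ) y = k).card
      = ((if k = p₁ then p₁ else 0) + (if k = p₂ then p₂ else 0))
        + (univ.filter fun y : Fin n =>
            (¬ σ.SameCycle j₁ y ∧ ¬ σ.SameCycle j₂ y)
              ∧ Function.minimalPeriod (⇑σ) y = k).card := by
    intro k
    have hsplit2 := Finset.card_filter_add_card_filter_not
      (s := univ.filter fun y : Fin n => Function.minimalPeriod (⇑σ) y = k)
      (p := fun y => σ.SameCycle j₁ y ∨ σ.SameCycle j₂ y)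
    have hU : ((univ.filter fun y : Fin n => Function.minimalPeriod (⇑σ) y = k).filter
        fun y => ¬ (σ.SameCycle j₁ y ∨ σ.SameCycle j₂ y))
        = univ.filter fun y : Fin n =>
            (¬ σ.SameCycle j₁ y ∧ ¬ σ.SameCycle j₂ y)
              ∧ Function.minimalPeriod (⇑σ) y = k := by
      ext y
      simp only [Finset.mem_filter, Finset.mem_univ, true_and, not_or]
      tauto
    have hP : ((univ.filter fun y : Fin n => Function.minimalPeriod (⇑σ) y = k).filter
        fun y => σ.SameCycle j₁ y ∨ σ.SameCycle j₂ y)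
        = (if k = p₁ then univ.filter fun y => σ.SameCycle j₁ y else ∅)
          ∪ (if k = p₂ then univ.filter fun y => σ.SameCycle j₂ y else ∅) := by
      ext y
      simp only [Finset.mem_filter, Finset.mem_univ, true_and, Finset.mem_union]
      constructor
      · rintro ⟨hk, hy | hy⟩
        · have hkp : p₁ = k := by rw [← hk]; exact AuxCT.mp_eq_of_sameCycle hy
          left
          rw [if_pos hkp.symm]
          exact Finset.mem_filter.2 ⟨Finset.mem_univ _, hy⟩
        · have hkp : p₂ = k := by rw [← hk]; exact AuxCT.mp_eq_of_sameCycle hy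
          right
          rw [if_pos hkp.symm]
          exact Finset.mem_filter.2 ⟨Finset.mem_univ _, hy⟩
      · rintro (hy | hy)
        · by_cases hk : k = p₁
          · rw [if_pos hk] at hy
            have hsc := (Finset.mem_filter.1 hy).2
            exact ⟨by rw [hk]; exact (AuxCT.mp_eq_of_sameCycle hsc).symm, Or.inl hsc⟩
          · rw [if_neg hk] at hy
            exact absurd hy (Finset.notMem_empty _)
        · by_cases hk : k = p₂
          · rw [if_pos hk] at hy
            have hsc := (Finset.mem_filter.1 hy).2
            exact ⟨by rw [hk]; exact (AuxCT.mp_eq_of_sameCycle hsc).symm, Or.inr hsc⟩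
          · rw [if_neg hk] at hy
            exact absurd hy (Finset.notMem_empty _)
    have hPd : Disjoint (if k = p₁ then univ.filter fun y => σ.SameCycle j₁ y else ∅)
        (if k = p₂ then univ.filter fun y => σ.SameCycle j₂ y else ∅) := by
      split_ifs <;> simp [hdisj]
    have hPcard : ((univ.filter fun y : Fin n => Function.minimalPeriod (⇑σ) y = k).filter
        fun y => σ.SameCycle j₁ y ∨ σ.SameCycle j₂ y).card
        = (if k = p₁ then p₁ else 0) + (if k = p₂ then p₂ else 0) := by
      rw [hP, Finset.card_union_of_disjoint hPd]
      congr 1 <;> split_ifs <;> simp [hc1, hc2]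
    rw [hU, hPcard] at hsplit2
    omega
  -- bridge to fullCycleType counts
  have hcfσ : ∀ k : ℕ,
      (univ.filter fun y : Fin n => Function.minimalPeriod (⇑σ) y = k).card
      = k * (fullCycleType σ).count k := by
    intro k
    rw [fullCycleType]
    have hcc := AuxCT.count_full σ k
    rwa [Fintype.card_fin] at hcc
  have hcfτ : ∀ k : ℕ,
      (univ.filter fun x : Fin (n+1) => Function.minimalPeriod (⇑τ) x = k).card
      = k * (fullCycleType τ).count k := by
    intro k
    rw [fullCycleType]
    have hcc := AuxCT.count_full τ k
    rwa [Fintype.card_fin] at hcc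
  -- membership of the two parts
  have hmem1 : p₁ ∈ fullCycleType σ := by
    rw [← Multiset.count_pos]
    by_contra hc
    have h0 : (fullCycleType σ).count p₁ = 0 := by omega
    have hcc := hcfσ p₁
    rw [h0, mul_zero, Finset.card_eq_zero] at hcc
    have hj1 : j₁ ∈ univ.filter (fun y => Function.minimalPeriod (⇑σ) y = p₁) :=
      Finset.mem_filter.2 ⟨Finset.mem_univ _, rfl⟩
    rw [hcc] at hj1
    exact Finset.notMem_empty _ hj1
  have hmem2 : p₂ ∈ (fullCycleType σ).erase p₁ := by
    by_cases hpp : p₂ = p₁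
    · have hsub : (univ.filter fun y => σ.SameCycle j₁ y)
          ∪ (univ.filter fun y => σ.SameCycle j₂ y)
          ⊆ univ.filter fun y : Fin n => Function.minimalPeriod (⇑σ) y = p₁ := by
        intro y hy
        rcases Finset.mem_union.1 hy with hy | hy
        · exact Finset.mem_filter.2 ⟨Finset.mem_univ _,
            (AuxCT.mp_eq_of_sameCycle (Finset.mem_filter.1 hy).2).symm⟩
        · refine Finset.mem_filter.2 ⟨Finset.mem_univ _, ?_⟩
          rw [← (AuxCT.mp_eq_of_sameCycle (Finset.mem_filter.1 hy).2)]
          exact hpp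
      have hcard : p₁ + p₂ ≤ p₁ * (fullCycleType σ).count p₁ := by
        calc p₁ + p₂
            = ((univ.filter fun y => σ.SameCycle j₁ y)
                ∪ (univ.filter fun y => σ.SameCycle j₂ y)).card := by
              rw [Finset.card_union_of_disjoint hdisj, hc1, hc2]
          _ ≤ (univ.filter fun y : Fin n => Function.minimalPeriod (⇑σ) y = p₁).card :=
              Finset.card_le_card hsub
          _ = p₁ * (fullCycleType σ).count p₁ := hcfσ p₁
      have hge2 : 2 ≤ (fullCycleType σ).count p₁ := by
        by_contra hlt
        have : (fullCycleType σ).count p₁ ≤ 1 := by omega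
        have : p₁ * (fullCycleType σ).count p₁ ≤ p₁ := by
          calc p₁ * (fullCycleType σ).count p₁ ≤ p₁ * 1 := Nat.mul_le_mul_left _ this
            _ = p₁ := Nat.mul_one _
        omega
      rw [hpp, ← Multiset.count_pos, Multiset.count_erase_self]
      omega
    · rw [Multiset.mem_erase_of_ne hpp, ← Multiset.count_pos]
      by_contra hc
      have h0 : (fullCycleType σ).count p₂ = 0 := by omega
      have hcc := hcfσ p₂
      rw [h0, mul_zero, Finset.card_eq_zero] at hcc
      have hj2 : j₂ ∈ univ.filter (fun y => Function.minimalPeriod (⇑σ) y = p₂) :=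
        Finset.mem_filter.2 ⟨Finset.mem_univ _, rfl⟩
      rw [hcc] at hj2
      exact Finset.notMem_empty _ hj2
  obtain ⟨s, hs⟩ : ∃ s, ((fullCycleType σ).erase p₁).erase p₂ = s := ⟨_, rfl⟩
  have hF : fullCycleType σ = p₁ ::ₘ p₂ ::ₘ s := by
    rw [← Multiset.cons_erase hmem1, ← Multiset.cons_erase hmem2, hs]
  rw [hs]
  rw [Multiset.ext]
  intro k
  rcases Nat.eq_zero_or_pos k with rfl | hk0
  · have hτ0 : (fullCycleType τ).count 0 = 0 := by
      rw [fullCycleType]; exact AuxCT.count_zero_full τ _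
    have hσ0 : (fullCycleType σ).count 0 = 0 := by
      rw [fullCycleType]; exact AuxCT.count_zero_full σ _
    rw [hF, Multiset.count_cons, Multiset.count_cons] at hσ0
    rw [hτ0, Multiset.count_cons]
    have hne : (0:ℕ) ≠ p₁+p₂+1 := by omega
    rw [if_neg hne]
    split_ifs at hσ0 <;> omega
  · -- k ≥ 1
    have hks : k * Multiset.count k s
        = (univ.filter fun y : Fin n =>
            (¬ σ.SameCycle j₁ y ∧ ¬ σ.SameCycle j₂ y)
              ∧ Function.minimalPeriod (⇑σ) y = k).card := by
      have h1 := (hcfσ k).symm.trans (hcount_σ k)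
      rw [hF, Multiset.count_cons, Multiset.count_cons] at h1
      by_cases e1 : k = p₁ <;> by_cases e2 : k = p₂
      · rw [if_pos e2, if_pos e1, if_pos e1, if_pos e2] at h1
        rw [← e1, ← e2] at h1
        have hexp : k * (Multiset.count k s + 1 + 1) = k * Multiset.count k s + k + k := by
          ring
        rw [hexp] at h1
        linarith
      · rw [if_pos e1, if_neg e2, if_pos e1, if_neg e2] at h1
        rw [← e1] at h1
        have hexp : k * (Multiset.count k s + 0 + 1) = k * Multiset.count k s + k := by
          ring
        rw [hexp] at h1
        linarith
      · rw [if_neg e1, if_pos e2, if_neg e1, if_pos e2] at h1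
        rw [← e2] at h1
        have hexp : k * (Multiset.count k s + 1 + 0) = k * Multiset.count k s + k := by
          ring
        rw [hexp] at h1
        linarith
      · rw [if_neg e1, if_neg e2, if_neg e1, if_neg e2] at h1
        have hexp : k * (Multiset.count k s + 0 + 0) = k * Multiset.count k s := by ring
        rw [hexp] at h1
        linarith
    have hL : k * (fullCycleType τ).count k
        = (if k = p₁+p₂+1 then p₁+p₂+1 else 0) + k * Multiset.count k s := by
      rw [← hcfτ k, hcount_τ k, hks]
    refine Nat.eq_of_mul_eq_mul_left hk0 ?_
    rw [hL, Multiset.count_cons, Nat.mul_add]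
    by_cases hkP : k = p₁+p₂+1
    · rw [if_pos hkP, if_pos hkP, hkP]
      ring
    · rw [if_neg hkP, if_neg hkP]
      ring
end

section
/- The total area A_{m} under all Dyck paths of semilength m (so length 2m) satisfies the recurrence A_{m-1} = (m−1)·Cat_{m−1} + Σ_{r+s=m, r,s≥1} (A_{r−1}·Cat_{s−1} + A_{s−1}·Cat_{r−1}) for every m ≥ 1. -/
/-!
Cutting a nonempty Dyck path at its first return to the axis writes it uniquely as `U x D y`,
with `x` and `y` Dyck paths of semilengths `i + j = n`. Area is additive under concatenation,
and nesting `x` lifts each of its `2i` steps by one and adds two steps ending at heights `1`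
and `0`, so `area (U x D y) = area x + area y + 2i + 1`. Summing over all pairs gives
`A (n+1) = ∑ (A i * C j + A j * C i + (2i+1) * C i * C j)`, and the symmetry `i ↔ j` turns the
last sum into `(n+1) * C (n+1)`.
-/

open Finset
open scoped Classical

/-- The height of a `±1`-path (encoded by `f : Fin m → Bool`, `true` = up-step)
after its first `i` steps. -/
def ht {m : ℕ} (f : Fin m → Bool) (i : ℕ) : ℤ :=
  ∑ j ∈ Finset.univ.filter (fun j : Fin m => (j : ℕ) < i),
    (if f j then (1 : ℤ) else -1)

/-- `f` is a Dyck path: it stays nonnegative and ends at height `0`. -/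
def IsDyck {m : ℕ} (f : Fin m → Bool) : Prop :=
  (∀ i : ℕ, i ≤ m → 0 ≤ ht f i) ∧ ht f m = 0

/-- The area under a path: the sum of its heights after each step. -/
def area {m : ℕ} (f : Fin m → Bool) : ℤ :=
  ∑ i ∈ Finset.range m, ht f (i+1)

/-- The set of all Dyck paths of length `2k`. -/
noncomputable def dyckSet (k : ℕ) : Finset (Fin (2*k) → Bool) :=
  Finset.univ.filter (fun f => IsDyck f)

/-- The total area `A_k` under all Dyck paths of length `2k`. -/
noncomputable def totalArea (k : ℕ) : ℤ :=
  ∑ f ∈ dyckSet k, area f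

open DyckStep

namespace DyckStep

def sign : DyckStep → ℤ
  | U => 1
  | D => -1

def ofBool : Bool → DyckStep
  | true => U
  | false => D

def toBool : DyckStep → Bool
  | U => true
  | D => false

end DyckStep

def pathHeight (l : List DyckStep) : ℤ := (l.map DyckStep.sign).sum

def pathArea (l : List DyckStep) : ℤ := ∑ i ∈ range l.length, pathHeight (l.take (i + 1))

lemma pathHeight_append (l l' : List DyckStep) :
    pathHeight (l ++ l') = pathHeight l + pathHeight l' := by
  simp [pathHeight]

lemma pathHeight_eq_count_sub_count (l : List DyckStep) :
    pathHeight l = l.count U - l.count D := by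
  induction l with
  | nil => rfl
  | cons s l ih =>
    cases s <;> simp only [pathHeight, List.map_cons, List.sum_cons, List.count_cons] at ih ⊢ <;>
      simp [DyckStep.sign, ih] <;> ring

lemma pathArea_append (l l' : List DyckStep) :
    pathArea (l ++ l') = pathArea l + l'.length * pathHeight l + pathArea l' := by
  have take_left : ∀ i ∈ range l.length,
      pathHeight ((l ++ l').take (i + 1)) = pathHeight (l.take (i + 1)) := by
    intro i hi
    rw [List.take_append_of_le_length (by simpa [Nat.succ_le_iff] using hi)]
  have take_right : ∀ i ∈ range l'.length,
      pathHeight ((l ++ l').take (l.length + i + 1)) =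
        pathHeight l + pathHeight (l'.take (i + 1)) := by
    intro i _
    rw [add_assoc, List.take_length_add_append, pathHeight_append]
  rw [pathArea, List.length_append, sum_range_add, sum_congr rfl take_left,
    sum_congr rfl take_right, sum_add_distrib, sum_const, card_range, nsmul_eq_mul, pathArea,
    pathArea]
  ring

namespace DyckWord

lemma pathHeight_toList (p : DyckWord) : pathHeight p.toList = 0 := by
  rw [pathHeight_eq_count_sub_count, p.count_U_eq_count_D, sub_self]

def area (p : DyckWord) : ℤ := pathArea p.toList

lemma area_add (p q : DyckWord) : (p + q).area = p.area + q.area := by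
  simp only [area, show (p + q).toList = p.toList ++ q.toList from rfl, pathArea_append,
    pathHeight_toList, mul_zero, add_zero]

lemma area_nest (p : DyckWord) : p.nest.area = p.area + 2 * p.semilength + 1 := by
  have hU : pathHeight [U] = 1 := rfl
  rw [area, show p.nest.toList = [U] ++ p.toList ++ [D] from rfl, pathArea_append,
    pathArea_append, pathHeight_append, pathHeight_toList, hU, ← area]
  have hlen : (p.toList.length : ℤ) = 2 * p.semilength := by
    exact_mod_cast p.two_mul_semilength_eq_length.symm
  simp [pathArea, pathHeight, DyckStep.sign, hlen]
  ring

noncomputable def firstReturnEquiv (n : ℕ) :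
    (Σ ij : antidiagonal n, {x : DyckWord // x.semilength = ij.1.1} ×
      {y : DyckWord // y.semilength = ij.1.2}) ≃ {p : DyckWord // p.semilength = n + 1} :=
  Equiv.ofBijective
    (fun s => ⟨s.2.1.1.nest + s.2.2.1, by
      have := Finset.HasAntidiagonal.mem_antidiagonal.mp s.1.2
      rw [semilength_add, semilength_nest, s.2.1.2, s.2.2.2]
      omega⟩)
    ⟨by
      rintro ⟨ij, ⟨x, hx⟩, ⟨y, hy⟩⟩ ⟨ij', ⟨x', hx'⟩, ⟨y', hy'⟩⟩ h
      have h : x.nest + y = x'.nest + y' := congrArg Subtype.val h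
      obtain rfl : x = x' := by
        simpa [insidePart_add, insidePart_nest] using congrArg insidePart h
      obtain rfl : y = y' := add_left_cancel h
      obtain rfl : ij = ij' := by
        have := Finset.HasAntidiagonal.mem_antidiagonal.mp ij.2
        have := Finset.HasAntidiagonal.mem_antidiagonal.mp ij'.2
        exact Subtype.ext (Prod.ext (by omega) (by omega))
      rfl,
    by
      rintro ⟨p, hp⟩
      have hp0 : p ≠ 0 := by rintro rfl; simp at hp
      have hs := semilength_insidePart_add_semilength_outsidePart_add_one hp0
      exact ⟨⟨⟨(p.insidePart.semilength, p.outsidePart.semilength), by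
        rw [Finset.HasAntidiagonal.mem_antidiagonal]; omega⟩, ⟨_, rfl⟩, ⟨_, rfl⟩⟩,
        Subtype.ext (nest_insidePart_add_outsidePart hp0)⟩⟩

theorem sum_semilength_succ {M : Type*} [AddCommMonoid M] (n : ℕ) (F : DyckWord → M) :
    ∑ p : {p : DyckWord // p.semilength = n + 1}, F p =
      ∑ ij ∈ antidiagonal n, ∑ x : {x : DyckWord // x.semilength = ij.1},
        ∑ y : {y : DyckWord // y.semilength = ij.2}, F (x.1.nest + y.1) := by
  rw [← (firstReturnEquiv n).sum_comp, ← univ_sigma_univ, sum_sigma,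
    ← sum_coe_sort (antidiagonal n)]
  simp only [Fintype.sum_prod_type]
  rfl

end DyckWord

theorem sum_antidiagonal_two_mul_add_one_mul_catalan (n : ℕ) :
    ∑ ij ∈ antidiagonal n, (2 * ij.1 + 1) * catalan ij.1 * catalan ij.2 =
      (n + 1) * catalan (n + 1) := by
  have swapped := Nat.sum_antidiagonal_swap (n := n)
    (f := fun ij => (2 * ij.1 + 1) * catalan ij.1 * catalan ij.2)
  -- Pairing `(i, j)` with `(j, i)` averages the weight `2i + 1` to `n + 1`.
  have : 2 * ∑ ij ∈ antidiagonal n, (2 * ij.1 + 1) * catalan ij.1 * catalan ij.2 =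
      2 * ((n + 1) * catalan (n + 1)) := by
    rw [two_mul]
    nth_rw 1 [← swapped]
    rw [← sum_add_distrib, catalan_succ', mul_sum, mul_sum]
    refine sum_congr rfl fun ij hij => ?_
    rw [Finset.HasAntidiagonal.mem_antidiagonal] at hij
    rw [Prod.fst_swap, Prod.snd_swap, ← hij]
    ring
  omega

def toSteps {m : ℕ} (f : Fin m → Bool) : List DyckStep := List.ofFn (DyckStep.ofBool ∘ f)

@[simp] lemma length_toSteps {m : ℕ} (f : Fin m → Bool) : (toSteps f).length = m :=
  List.length_ofFn

lemma ht_eq_pathHeight_take {m : ℕ} (f : Fin m → Bool) (i : ℕ) :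
    ht f i = pathHeight ((toSteps f).take i) := by
  rw [pathHeight, toSteps, List.map_take, List.map_ofFn, List.sum_take_ofFn, ht]
  refine sum_congr rfl fun j _ => ?_
  show _ = DyckStep.sign (DyckStep.ofBool (f j))
  cases f j <;> rfl

lemma area_eq_pathArea {m : ℕ} (f : Fin m → Bool) : area f = pathArea (toSteps f) := by
  simp only [area, pathArea, length_toSteps, ht_eq_pathHeight_take]

lemma isDyck_iff {m : ℕ} (f : Fin m → Bool) :
    IsDyck f ↔ (toSteps f).count U = (toSteps f).count D ∧
      ∀ i, ((toSteps f).take i).count D ≤ ((toSteps f).take i).count U := by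
  have take_length : (toSteps f).take m = toSteps f := List.take_of_length_le (by simp)
  simp only [IsDyck, ht_eq_pathHeight_take, pathHeight_eq_count_sub_count, take_length]
  constructor
  · rintro ⟨nonneg, ends_zero⟩
    refine ⟨by omega, fun i => ?_⟩
    rcases le_or_gt i m with hi | hi
    · linarith [nonneg i hi]
    · rw [List.take_of_length_le (by rw [length_toSteps]; omega)]
      omega
  · rintro ⟨ends_zero, nonneg⟩
    exact ⟨fun i _ => by linarith [nonneg i], by omega⟩

def toDyckWord {m : ℕ} (f : Fin m → Bool) (hf : IsDyck f) : DyckWord :=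
  ⟨toSteps f, ((isDyck_iff f).1 hf).1, ((isDyck_iff f).1 hf).2⟩

def ofDyckWord (p : DyckWord) (k : ℕ) : Fin (2 * k) → Bool :=
  fun j => (p.toList.getD j D).toBool

lemma toSteps_ofDyckWord {p : DyckWord} {k : ℕ} (hp : p.semilength = k) :
    toSteps (ofDyckWord p k) = p.toList := by
  have hlen : p.toList.length = 2 * k := by rw [← p.two_mul_semilength_eq_length, hp]
  refine List.ext_getElem (by simp [hlen]) fun j hj _ => ?_
  simp only [toSteps, ofDyckWord, List.getElem_ofFn, Function.comp_apply]
  rw [List.getD_eq_getElem _ _ (by simpa [hlen] using hj)]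
  cases p.toList[j] <;> rfl

lemma totalArea_eq_sum_area (k : ℕ) :
    totalArea k = ∑ p : {p : DyckWord // p.semilength = k}, p.1.area := by
  have semilength_toDyckWord {f : Fin (2 * k) → Bool} (hf : IsDyck f) :
      (toDyckWord f hf).semilength = k := by
    have := (toDyckWord f hf).two_mul_semilength_eq_length
    rw [show (toDyckWord f hf).toList = toSteps f from rfl, length_toSteps] at this
    omega
  refine sum_bij'
    (fun f hf => ⟨toDyckWord f (by simpa [dyckSet] using hf), semilength_toDyckWord _⟩)
    (fun p _ => ofDyckWord p.1 k) (fun _ _ => mem_univ _) (fun p _ => ?_) (fun f _ => ?_)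
    (fun p _ => ?_) (fun f _ => area_eq_pathArea f)
  · simp only [dyckSet, mem_filter, mem_univ, true_and, isDyck_iff]
    rw [toSteps_ofDyckWord p.2]
    exact ⟨p.1.count_U_eq_count_D, p.1.count_D_le_count_U⟩
  · funext j
    simp only [ofDyckWord, toDyckWord, toSteps]
    rw [List.getD_eq_getElem _ _ (by simp), List.getElem_ofFn, Function.comp_apply]
    cases f j <;> rfl
  · exact Subtype.ext (DyckWord.ext (toSteps_ofDyckWord p.2))

theorem totalArea_zero : totalArea 0 = 0 := by
  simp [totalArea, area]

theorem totalArea_succ (n : ℕ) :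
    totalArea (n + 1) = ∑ ij ∈ antidiagonal n,
      (totalArea ij.1 * catalan ij.2 + totalArea ij.2 * catalan ij.1 +
        (2 * ij.1 + 1) * catalan ij.1 * catalan ij.2) := by
  rw [totalArea_eq_sum_area, DyckWord.sum_semilength_succ]
  refine sum_congr rfl fun ij _ => ?_
  have area_split (x : {x : DyckWord // x.semilength = ij.1}) (y : DyckWord) :
      (x.1.nest + y).area = x.1.area + y.area + (2 * ij.1 + 1) := by
    rw [DyckWord.area_add, DyckWord.area_nest, x.2]
    ring
  simp only [area_split, sum_add_distrib, sum_const, card_univ,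
    DyckWord.card_dyckWord_semilength_eq_catalan, nsmul_eq_mul, ← mul_sum,
    ← totalArea_eq_sum_area]
  ring

/-- Recurrence for the total area of Dyck paths:
`A_{m-1} = (m−1)·Cat_{m−1} + Σ_{r+s=m, r,s≥1} (A_{r−1}·Cat_{s−1} + A_{s−1}·Cat_{r−1})`. -/
theorem totalArea_recurrence (m : ℕ) (hm : 1 ≤ m) :
    totalArea (m-1) =
      ((m : ℤ) - 1) * catalan (m-1)
        + ∑ r ∈ Finset.Ico 1 m,
            (totalArea (r-1) * catalan (m-r-1) + totalArea (m-r-1) * catalan (r-1)) := by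
  obtain rfl | ⟨n, rfl⟩ : m = 1 ∨ ∃ n, m = n + 2 := by
    rcases m with _ | _ | n <;> simp_all
  · simp [totalArea_zero]
  have reindex : ∑ r ∈ Finset.Ico 1 (n + 2),
      (totalArea (r - 1) * catalan (n + 2 - r - 1) +
        totalArea (n + 2 - r - 1) * catalan (r - 1)) =
      ∑ ij ∈ antidiagonal n,
        (totalArea ij.1 * catalan ij.2 + totalArea ij.2 * catalan ij.1) := by
    rw [sum_Ico_eq_sum_range, Nat.sum_antidiagonal_eq_sum_range_succ_mk]
    refine sum_congr rfl fun i _ => ?_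
    rw [show 1 + i - 1 = i by omega, show n + 2 - (1 + i) - 1 = n - i by omega]
  have weighted : ∑ ij ∈ antidiagonal n, (2 * (ij.1 : ℤ) + 1) * catalan ij.1 * catalan ij.2 =
      (n + 1) * catalan (n + 1) := by
    exact_mod_cast sum_antidiagonal_two_mul_add_one_mul_catalan n
  rw [reindex, show n + 2 - 1 = n + 1 from rfl, totalArea_succ, sum_add_distrib, weighted]
  push_cast
  ring
end

section
/- The total area of all Dyck paths of length 2k is A_k = 4^k − binomial(2k+1, k). -/
open Finset
open scoped Classical

/-!
Generalise from Dyck paths to the paths with `b` down-steps that stay weakly above the axis and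
end at height `h`. Splitting off the last step gives Pascal-type recursions for their number and
for their total area, since a final step that ends at height `h` adds `h` to the area. These
recursions are solved by the ballot numbers `C(2b+h, b+h) - C(2b+h, b+h+1)` and by
`(h+1) ∑_{s<b} C(2b+h+1, s) + C(h+1, 2) C(2b+h+1, b)`. For `h = 0` the latter is
`∑_{s<k} C(2k+1, s)`, half of `2^(2k+1) - 2 C(2k+1, k)` by the symmetry of binomial coefficients.
-/

lemma ht_snoc {n : ℕ} (g : Fin n → Bool) (s : Bool) (i : ℕ) :
    ht (Fin.snoc g s : Fin (n + 1) → Bool) i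
      = ht g i + if n < i then (if s then 1 else -1) else 0 := by
  simp only [ht, Finset.sum_filter, Fin.sum_univ_castSucc, Fin.snoc_castSucc, Fin.snoc_last,
    Fin.val_castSucc, Fin.val_last]

lemma ht_snoc_of_le {n i : ℕ} (g : Fin n → Bool) (s : Bool) (hi : i ≤ n) :
    ht (Fin.snoc g s : Fin (n + 1) → Bool) i = ht g i := by
  simp [ht_snoc, hi.not_gt]

lemma ht_of_length_le {m i : ℕ} (f : Fin m → Bool) (h : m ≤ i) : ht f i = ht f m := by
  unfold ht
  congr 1
  ext j
  simp only [Finset.mem_filter, Finset.mem_univ, true_and]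
  omega

lemma ht_snoc_length {n : ℕ} (g : Fin n → Bool) (s : Bool) :
    ht (Fin.snoc g s : Fin (n + 1) → Bool) (n + 1) = ht g n + if s then 1 else -1 := by
  simp [ht_snoc, ht_of_length_le g n.le_succ]

lemma ht_le_length {m : ℕ} (f : Fin m → Bool) : ht f m ≤ m := by
  calc ht f m ≤ ∑ _j ∈ Finset.univ.filter (fun j : Fin m => (j : ℕ) < m), (1 : ℤ) :=
        Finset.sum_le_sum fun j _ => by split <;> norm_num
    _ ≤ m := by simp

lemma area_snoc {n : ℕ} (g : Fin n → Bool) (s : Bool) :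
    area (Fin.snoc g s : Fin (n + 1) → Bool)
      = area g + ht (Fin.snoc g s : Fin (n + 1) → Bool) (n + 1) := by
  rw [area, Finset.sum_range_succ, area]
  congr 1
  exact Finset.sum_congr rfl fun i hi => ht_snoc_of_le g s (Finset.mem_range.1 hi)

noncomputable def nonnegPaths (n h : ℕ) : Finset (Fin n → Bool) :=
  Finset.univ.filter fun f => (∀ i ≤ n, 0 ≤ ht f i) ∧ ht f n = h

lemma mem_nonnegPaths_snoc {n h : ℕ} (g : Fin n → Bool) (s : Bool) :
    (Fin.snoc g s : Fin (n + 1) → Bool) ∈ nonnegPaths (n + 1) h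
      ↔ (∀ i ≤ n, 0 ≤ ht g i) ∧ ht g n + (if s then 1 else -1) = h := by
  simp only [nonnegPaths, Finset.mem_filter, Finset.mem_univ, true_and, ht_snoc_length]
  constructor
  · rintro ⟨hpos, hend⟩
    exact ⟨fun i hi => ht_snoc_of_le g s hi ▸ hpos i (Nat.le_succ_of_le hi), hend⟩
  · rintro ⟨hpos, hend⟩
    refine ⟨fun i hi => ?_, hend⟩
    rcases Nat.lt_or_eq_of_le hi with hi | rfl
    · exact ht_snoc_of_le g s (Nat.lt_succ_iff.1 hi) ▸ hpos i (Nat.lt_succ_iff.1 hi)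
    · rw [ht_snoc_length, hend]; positivity

lemma nonnegPaths_eq_empty_of_lt {n h : ℕ} (hlt : n < h) : nonnegPaths n h = ∅ :=
  Finset.filter_false_of_mem fun f _ ⟨_, hend⟩ => by
    have := ht_le_length f
    omega

lemma exists_eq_snoc {α : Type*} {n : ℕ} (f : Fin (n + 1) → α) : ∃ g s, f = Fin.snoc g s :=
  ⟨Fin.init f, f (Fin.last n), (Fin.snoc_init_self f).symm⟩

lemma nonnegPaths_succ_zero (n : ℕ) :
    nonnegPaths (n + 1) 0 = (nonnegPaths n 1).image (Fin.snoc (α := fun _ => Bool) · false) := by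
  ext f
  obtain ⟨g, s, rfl⟩ := exists_eq_snoc f
  rw [mem_nonnegPaths_snoc]
  cases s <;> simp only [nonnegPaths, Finset.mem_image, Finset.mem_filter,
    Finset.mem_univ, true_and, Fin.snoc_inj] <;> grind

lemma nonnegPaths_succ_succ (n h : ℕ) :
    nonnegPaths (n + 1) (h + 1)
      = (nonnegPaths n h).image (Fin.snoc (α := fun _ => Bool) · true)
        ∪ (nonnegPaths n (h + 2)).image (Fin.snoc (α := fun _ => Bool) · false) := by
  ext f
  obtain ⟨g, s, rfl⟩ := exists_eq_snoc f
  rw [mem_nonnegPaths_snoc]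
  cases s <;> simp only [nonnegPaths, Finset.mem_image, Finset.mem_union, Finset.mem_filter,
    Finset.mem_univ, true_and, Fin.snoc_inj] <;> grind

lemma sum_nonnegPaths_succ_zero {M : Type*} [AddCommMonoid M] (n : ℕ)
    (φ : (Fin (n + 1) → Bool) → M) :
    ∑ f ∈ nonnegPaths (n + 1) 0, φ f = ∑ g ∈ nonnegPaths n 1, φ (Fin.snoc g false) := by
  rw [nonnegPaths_succ_zero, Finset.sum_image fun _ _ _ _ h => Fin.snoc_left_injective _ h]

lemma sum_nonnegPaths_succ_succ {M : Type*} [AddCommMonoid M] (n h : ℕ)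
    (φ : (Fin (n + 1) → Bool) → M) :
    ∑ f ∈ nonnegPaths (n + 1) (h + 1), φ f
      = ∑ g ∈ nonnegPaths n h, φ (Fin.snoc g true)
        + ∑ g ∈ nonnegPaths n (h + 2), φ (Fin.snoc g false) := by
  have hdisj : Disjoint ((nonnegPaths n h).image (Fin.snoc (α := fun _ => Bool) · true))
      ((nonnegPaths n (h + 2)).image (Fin.snoc (α := fun _ => Bool) · false)) := by
    simp [Finset.disjoint_left]
  rw [nonnegPaths_succ_succ, Finset.sum_union hdisj,
    Finset.sum_image fun _ _ _ _ h => Fin.snoc_left_injective _ h,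
    Finset.sum_image fun _ _ _ _ h => Fin.snoc_left_injective _ h]

lemma card_nonnegPaths_succ_zero (n : ℕ) : #(nonnegPaths (n + 1) 0) = #(nonnegPaths n 1) := by
  simp only [Finset.card_eq_sum_ones, sum_nonnegPaths_succ_zero]

lemma card_nonnegPaths_succ_succ (n h : ℕ) :
    #(nonnegPaths (n + 1) (h + 1)) = #(nonnegPaths n h) + #(nonnegPaths n (h + 2)) := by
  simp only [Finset.card_eq_sum_ones, sum_nonnegPaths_succ_succ]

lemma area_snoc_of_mem {n h : ℕ} {g : Fin n → Bool} (hg : g ∈ nonnegPaths n h) (s : Bool) :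
    area (Fin.snoc g s : Fin (n + 1) → Bool) = area g + (h + if s then 1 else -1) := by
  rw [area_snoc, ht_snoc_length, (Finset.mem_filter.1 hg).2.2]

noncomputable def areaSum (n h : ℕ) : ℤ :=
  ∑ f ∈ nonnegPaths n h, area f

lemma areaSum_succ_zero (n : ℕ) : areaSum (n + 1) 0 = areaSum n 1 := by
  rw [areaSum, sum_nonnegPaths_succ_zero, areaSum]
  refine Finset.sum_congr rfl fun g hg => ?_
  rw [area_snoc_of_mem hg]
  norm_num

lemma areaSum_succ_succ (n h : ℕ) :
    areaSum (n + 1) (h + 1)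
      = areaSum n h + areaSum n (h + 2) + (h + 1) * #(nonnegPaths (n + 1) (h + 1)) := by
  rw [areaSum, sum_nonnegPaths_succ_succ,
    Finset.sum_congr rfl fun g hg => area_snoc_of_mem hg true,
    Finset.sum_congr rfl fun g hg => area_snoc_of_mem hg false, card_nonnegPaths_succ_succ,
    areaSum, areaSum]
  simp only [Finset.sum_add_distrib, Finset.sum_const, nsmul_eq_mul]
  push_cast
  ring

lemma card_nonnegPaths_zero_zero : #(nonnegPaths 0 0) = 1 := by
  rw [show nonnegPaths 0 0 = Finset.univ from Finset.filter_true_of_mem (by simp [ht])]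
  rfl

lemma areaSum_zero (h : ℕ) : areaSum 0 h = 0 := by
  simp [areaSum, area]

theorem card_nonnegPaths_add_choose :
    ∀ b h : ℕ, #(nonnegPaths (2 * b + h) h) + (2 * b + h).choose (b + h + 1)
      = (2 * b + h).choose (b + h)
  | 0, 0 => by simp [card_nonnegPaths_zero_zero]
  | 0, h + 1 => by
    have ih := card_nonnegPaths_add_choose 0 h
    rw [show 2 * 0 + (h + 1) = (2 * 0 + h) + 1 from rfl, card_nonnegPaths_succ_succ,
      nonnegPaths_eq_empty_of_lt (n := 2 * 0 + h) (h := h + 2) (by omega)]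
    simp_all
  | b + 1, 0 => by
    have ih := card_nonnegPaths_add_choose b 1
    have hsymm : (2 * b + 1).choose b = (2 * b + 1).choose (b + 1) :=
      Nat.choose_symm_of_eq_add (by ring)
    have hpascal₁ := Nat.choose_succ_succ' (2 * b + 1) b
    have hpascal₂ := Nat.choose_succ_succ' (2 * b + 1) (b + 1)
    rw [show 2 * (b + 1) + 0 = (2 * b + 1) + 1 by ring, card_nonnegPaths_succ_zero]
    ring_nf at *
    omega
  | b + 1, h + 1 => by
    have ih₁ := card_nonnegPaths_add_choose (b + 1) h
    have ih₂ := card_nonnegPaths_add_choose b (h + 2)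
    have hpascal₁ := Nat.choose_succ_succ' (2 * b + h + 2) (b + h + 1)
    have hpascal₂ := Nat.choose_succ_succ' (2 * b + h + 2) (b + h + 2)
    rw [show 2 * (b + 1) + h = 2 * b + h + 2 by ring] at ih₁
    rw [show 2 * b + (h + 2) = 2 * b + h + 2 by ring] at ih₂
    rw [show 2 * (b + 1) + (h + 1) = (2 * b + h + 2) + 1 by ring, card_nonnegPaths_succ_succ]
    ring_nf at *
    omega
termination_by b h => 2 * b + h

lemma sum_range_choose_succ (m b : ℕ) :
    ∑ s ∈ range (b + 1), (m + 1).choose s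
      = ∑ s ∈ range (b + 1), m.choose s + ∑ s ∈ range b, m.choose s := by
  simp only [Finset.sum_range_succ', Nat.choose_succ_succ', Finset.sum_add_distrib,
    Nat.choose_zero_right]
  ring

theorem areaSum_eq :
    ∀ b h : ℕ, areaSum (2 * b + h) h
      = ((h + 1) * ∑ s ∈ range b, (2 * b + h + 1).choose s
          + (h + 1).choose 2 * (2 * b + h + 1).choose b : ℕ)
  | 0, 0 => by simp [areaSum_zero]
  | 0, h + 1 => by
    have ih := areaSum_eq 0 h
    have hcard := card_nonnegPaths_add_choose 0 (h + 1)
    have hempty : areaSum h (h + 2) = 0 := by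
      rw [areaSum, nonnegPaths_eq_empty_of_lt (by omega), Finset.sum_empty]
    rw [show 2 * 0 + h = h by ring] at ih
    rw [show 2 * 0 + (h + 1) = h + 1 by ring] at hcard ⊢
    simp only [Nat.choose_self, Nat.choose_succ_self, add_zero] at hcard
    rw [areaSum_succ_succ, ih, hempty, hcard, Nat.choose_succ_succ' (h + 1) 1]
    simp
    ring
  | b + 1, 0 => by
    have ih := areaSum_eq b 1
    rw [show 2 * (b + 1) + 0 = (2 * b + 1) + 1 by ring, areaSum_succ_zero, ih,
      sum_range_choose_succ, Finset.sum_range_succ]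
    simp
    ring
  | b + 1, h + 1 => by
    have ih₁ := areaSum_eq (b + 1) h
    have ih₂ := areaSum_eq b (h + 2)
    have hcard := card_nonnegPaths_add_choose (b + 1) (h + 1)
    rw [show 2 * (b + 1) + h = 2 * b + h + 2 by ring] at ih₁
    rw [show 2 * b + (h + 2) = 2 * b + h + 2 by ring] at ih₂
    rw [show 2 * (b + 1) + (h + 1) = 2 * b + h + 2 + 1 by ring] at hcard ⊢
    -- by symmetry, `hcard` now reads `#paths + C(2b+h+3, b) = C(2b+h+3, b+1)`
    rw [Nat.choose_symm_of_eq_add (show 2 * b + h + 2 + 1 = b + 1 + (h + 1) + 1 + b by ring),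
      Nat.choose_symm_of_eq_add (show 2 * b + h + 2 + 1 = b + 1 + (h + 1) + (b + 1) by ring)]
      at hcard
    have hsum := sum_range_choose_succ (2 * b + h + 2 + 1) b
    have hsum' := Finset.sum_range_succ (fun s => (2 * b + h + 2 + 1).choose s) b
    have hpascal := Nat.choose_succ_succ' (2 * b + h + 2 + 1) b
    have htri₁ : (h + 1 + 1).choose 2 = h + 1 + (h + 1).choose 2 := by
      rw [Nat.choose_succ_succ', Nat.choose_one_right]
    have htri₂ : (h + 2 + 1).choose 2 = h + 2 + (h + 1 + 1).choose 2 := by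
      rw [Nat.choose_succ_succ' (h + 2), Nat.choose_one_right]
    rw [areaSum_succ_succ, ih₁, ih₂]
    zify at hcard hsum hsum' hpascal htri₁ htri₂
    push_cast
    linear_combination (h + 1 : ℤ) * hcard - (h + 2 : ℤ) * hsum - hsum'
      - ((h + 1 + 1).choose 2 : ℤ) * hpascal + ((2 * b + h + 2 + 1).choose b : ℤ) * htri₂
      - ((2 * b + h + 2 + 1).choose (b + 1) : ℤ) * htri₁
termination_by b h => 2 * b + h

lemma dyckSet_eq_nonnegPaths (k : ℕ) : dyckSet k = nonnegPaths (2 * k) 0 :=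
  Finset.filter_congr fun f _ => by simp [IsDyck]

/-- The total area of all Dyck paths of length `2k` is `4^k − binom(2k+1, k)`. -/
theorem totalArea_closed_form (k : ℕ) :
    totalArea k = 4^k - (Nat.choose (2*k+1) k : ℤ) := by
  have hhalf := Nat.sum_range_choose_halfway k
  rw [Finset.sum_range_succ] at hhalf
  calc totalArea k = areaSum (2 * k + 0) 0 := by rw [totalArea, dyckSet_eq_nonnegPaths]; rfl
    _ = ∑ s ∈ range k, ((2 * k + 1).choose s : ℤ) := by rw [areaSum_eq k 0]; simp
    _ = 4^k - (Nat.choose (2*k+1) k : ℤ) := by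
      rw [eq_sub_iff_add_eq]
      exact_mod_cast hhalf
end
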